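/- arXiv:2308.04015 — 4 statements merged into one kernel-verified Lean document; each statement's English description precedes it below -/
import Mathlib

section
/- Convolution formula for Weingarten calculus on the complex Grassmannian: for all integers 1 ≤ M < N, every integer 1 ≤ k ≤ N, and all indices i_1, …, i_k, j_1, …, j_k ∈ {1, …, N}, one has ∫_{S(M,N)} S_{i_1 j_1} S_{i_2 j_2} ⋯ S_{i_k j_k} dS = ∑_{σ ∈ S_k} (∏_{a=1}^{k} [i_{σ(a)} = j_a]) · W(σ), where [P] denotes 1 if P holds and 0 otherwise. -/
/-!
Convolution formula for Weingarten calculus on the complex Grassmannian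
`Gr(M,N)`, viewed as the space `S(M,N)` of `N×N` idempotent Hermitian matrices
of rank `M`, equipped with the normalised invariant measure: the pushforward
of the Haar probability measure on the unitary group `U(N)` under
`U ↦ U I_{M,N} U*`.  We quantify over the Haar probability measure `ν` on
`U(N)` (it is unique) via the predicates `IsHaarMeasure` and
`IsProbabilityMeasure`.
-/

open MeasureTheory

noncomputable instance matMS (N : ℕ) : MeasurableSpace (Matrix (Fin N) (Fin N) ℂ) := borel _
instance matBS (N : ℕ) : BorelSpace (Matrix (Fin N) (Fin N) ℂ) := ⟨rfl⟩

/-- The `N × N` matrix `I_{M,N}` whose first `M` diagonal entries are `1` and whose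
remaining entries are `0`. -/
def IMN (M N : ℕ) : Matrix (Fin N) (Fin N) ℂ :=
  Matrix.diagonal fun i => if (i : ℕ) < M then 1 else 0

/-- The normalised invariant measure on `S(M,N)`: the pushforward of the Haar
probability measure `ν` on `U(N)` under `U ↦ U I_{M,N} U*`. -/
noncomputable def grassMeasure {N : ℕ} (M : ℕ)
    (ν : Measure (Matrix.unitaryGroup (Fin N) ℂ)) : Measure (Matrix (Fin N) (Fin N) ℂ) :=
  Measure.map (fun U : Matrix.unitaryGroup (Fin N) ℂ =>
    (U : Matrix (Fin N) (Fin N) ℂ) * IMN M N * star (U : Matrix (Fin N) (Fin N) ℂ)) ν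

/-- The Weingarten function `W(σ) = ∫_{S(M,N)} S_{1,σ(1)} ⋯ S_{k,σ(k)} dS`
for a permutation `σ ∈ S_k` with `k ≤ N`. -/
noncomputable def Wg {N : ℕ} (M : ℕ) (ν : Measure (Matrix.unitaryGroup (Fin N) ℂ))
    (k : ℕ) (σ : Equiv.Perm (Fin k)) : ℂ :=
  if h : k ≤ N then
    ∫ S, ∏ a : Fin k, S (Fin.castLE h a) (Fin.castLE h (σ a)) ∂ (grassMeasure M ν)
  else 0


namespace WgAux

variable {N k : ℕ}

def cnt (j : Fin k → Fin N) (v : Fin N) : ℕ := (Finset.univ.filter fun a => j a = v).card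

def mu (j : Fin k → Fin N) : ℕ := ∑ v : Fin N, (cnt j v)^2

def goodFun (hkN : k ≤ N) (φ : (Fin k → Fin N) → ℂ) : Prop :=
  ∀ V : Matrix (Fin N) (Fin N) ℂ, V ∈ Matrix.unitaryGroup (Fin N) ℂ →
    ∑ jj : Fin k → Fin N, φ jj * ∏ a : Fin k, V (jj a) (Fin.castLE hkN a) = 0

theorem sum_prod_eq (f : Fin k → Fin N → ℂ) :
    ∑ j : Fin k → Fin N, ∏ a : Fin k, f a (j a) = ∏ a : Fin k, ∑ x : Fin N, f a x := by
  rw [Finset.prod_univ_sum]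
  rw [Fintype.piFinset_univ]

theorem goodFun_comp {hkN : k ≤ N} {φ : (Fin k → Fin N) → ℂ} (hφ : goodFun hkN φ)
    (V' : Matrix (Fin N) (Fin N) ℂ) (hV' : V' ∈ Matrix.unitaryGroup (Fin N) ℂ) :
    goodFun hkN (fun j => ∑ jj : Fin k → Fin N, φ jj * ∏ a, V' (jj a) (j a)) := by
  intro V hV
  have key : ∀ jj : Fin k → Fin N,
      ∑ j : Fin k → Fin N, (∏ a, V' (jj a) (j a)) * ∏ a, V (j a) (Fin.castLE hkN a)
        = ∏ a, (V' * V) (jj a) (Fin.castLE hkN a) := by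
    intro jj
    have h1 : ∀ j : Fin k → Fin N,
        (∏ a, V' (jj a) (j a)) * (∏ a, V (j a) (Fin.castLE hkN a))
          = ∏ a, (V' (jj a) (j a) * V (j a) (Fin.castLE hkN a)) := fun j =>
      (Finset.prod_mul_distrib).symm
    simp_rw [h1]
    rw [sum_prod_eq (fun a x => V' (jj a) x * V x (Fin.castLE hkN a))]
    exact Finset.prod_congr rfl fun a _ => (Matrix.mul_apply).symm
  simp_rw [Finset.sum_mul, mul_assoc]
  rw [Finset.sum_comm]
  simp_rw [← Finset.mul_sum]
  simp_rw [key]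
  exact hφ (V' * V) (mul_mem hV' hV)

def permMat (π : Equiv.Perm (Fin N)) : Matrix (Fin N) (Fin N) ℂ :=
  fun x y => if x = π y then 1 else 0

theorem permMat_mem (π : Equiv.Perm (Fin N)) : permMat π ∈ Matrix.unitaryGroup (Fin N) ℂ := by
  rw [Matrix.mem_unitaryGroup_iff']
  ext x y
  simp [Matrix.mul_apply, Matrix.star_apply, permMat, Matrix.one_apply,
    apply_ite (star : ℂ → ℂ), ite_mul, Finset.sum_ite_eq', EmbeddingLike.apply_eq_iff_eq, eq_comm]



variable {m n₀ : Fin N}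
theorem sum_pair_eq {m n₀ : Fin N} (hmn : m ≠ n₀) (f : Fin N → ℂ)
    (h : ∀ t, t ≠ m → t ≠ n₀ → f t = 0) : ∑ t, f t = f m + f n₀ := by
  have h1 : ∑ t, f t = ∑ t ∈ ({m, n₀} : Finset (Fin N)), f t := by
    refine (Finset.sum_subset (Finset.subset_univ _) ?_).symm
    intro t _ ht
    simp only [Finset.mem_insert, Finset.mem_singleton] at ht
    push_neg at ht
    exact h t ht.1 ht.2
  rw [h1, Finset.sum_pair hmn]
noncomputable def cc : ℂ := ((Real.sqrt 2)⁻¹ : ℝ)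
theorem cc_mul_cc : cc * cc = (2 : ℂ)⁻¹ := by
  rw [cc, ← Complex.ofReal_mul, ← mul_inv, Real.mul_self_sqrt (by norm_num)]
  norm_num
theorem cc_ne_zero : cc ≠ 0 := by
  simp only [cc, Ne, Complex.ofReal_eq_zero, inv_eq_zero]
  intro h
  rw [Real.sqrt_eq_zero'] at h
  norm_num at h

theorem conj_cc : (starRingEnd ℂ) cc = cc := Complex.conj_ofReal _
noncomputable def givens (m n₀ : Fin N) (ω : ℂ) : Matrix (Fin N) (Fin N) ℂ :=
  fun x y =>
    if y = m then (if x = m then cc else if x = n₀ then cc * ω else 0)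
    else if y = n₀ then (if x = m then -(cc * (starRingEnd ℂ) ω) else if x = n₀ then cc else 0)
    else if x = y then 1 else 0



theorem givens_mm (ω : ℂ) : givens m n₀ ω m m = cc := by simp [givens]
theorem givens_nm (hmn : m ≠ n₀) (ω : ℂ) : givens m n₀ ω n₀ m = cc * ω := by
  simp [givens, hmn, hmn.symm]
theorem givens_mn (hmn : m ≠ n₀) (ω : ℂ) :
    givens m n₀ ω m n₀ = -(cc * (starRingEnd ℂ) ω) := by
  simp [givens, hmn, hmn.symm]
theorem givens_nn (hmn : m ≠ n₀) (ω : ℂ) : givens m n₀ ω n₀ n₀ = cc := by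
  simp [givens, hmn, hmn.symm]
theorem givens_xm (ω : ℂ) {x : Fin N} (hx : x ≠ m) (hx' : x ≠ n₀) : givens m n₀ ω x m = 0 := by
  simp [givens, hx, hx']
theorem givens_xn (hmn : m ≠ n₀) (ω : ℂ) {x : Fin N} (hx : x ≠ m) (hx' : x ≠ n₀) :
    givens m n₀ ω x n₀ = 0 := by
  simp [givens, hx, hx', hmn.symm]
theorem givens_other (ω : ℂ) {x y : Fin N} (hy : y ≠ m) (hy' : y ≠ n₀) :
    givens m n₀ ω x y = if x = y then 1 else 0 := by
  simp [givens, hy, hy']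

theorem givens_mem (hmn : m ≠ n₀) {ω : ℂ} (hω : ω * (starRingEnd ℂ) ω = 1) :
    givens m n₀ ω ∈ Matrix.unitaryGroup (Fin N) ℂ := by
  have hcc := cc_mul_cc
  rw [Matrix.mem_unitaryGroup_iff']
  ext x y
  rw [Matrix.mul_apply, Matrix.one_apply]
  simp only [Matrix.star_apply, RCLike.star_def]
  by_cases hxm : x = m <;> by_cases hxn : x = n₀ <;> by_cases hym : y = m <;> by_cases hyn : y = n₀
  all_goals try exact absurd (hxm.symm.trans hxn) hmn
  all_goals try exact absurd (hym.symm.trans hyn) hmn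
  -- case x = m, y = m
  · rw [hxm, hym, if_pos rfl]
    rw [sum_pair_eq hmn _ (fun t htm htn => by rw [givens_xm ω htm htn]; simp)]
    rw [givens_mm, givens_nm hmn]
    rw [conj_cc, map_mul (starRingEnd ℂ) cc ω, conj_cc]
    calc cc * cc + cc * (starRingEnd ℂ) ω * (cc * ω)
        = cc * cc * (1 + ω * (starRingEnd ℂ) ω) := by ring
      _ = 1 := by rw [hω, hcc]; norm_num
  -- case x = m, y = n₀
  · rw [hxm, hyn, if_neg hmn]
    rw [sum_pair_eq hmn _ (fun t htm htn => by
      rw [givens_xm ω htm htn]; simp)]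
    rw [givens_mm, givens_mn hmn, givens_nm hmn, givens_nn hmn]
    rw [conj_cc, map_mul (starRingEnd ℂ) cc ω, conj_cc]
    ring
  -- case x = m, y other
  · rw [hxm, if_neg (fun h : m = y => hym h.symm)]
    rw [sum_pair_eq hmn _ (fun t htm htn => by rw [givens_xm ω htm htn]; simp)]
    rw [givens_mm, givens_nm hmn, givens_other ω hym hyn, givens_other ω hym hyn]
    rw [if_neg (fun h : m = y => hym h.symm), if_neg (fun h : n₀ = y => hyn h.symm)]
    simp
  -- case x = n₀, y = m
  · rw [hxn, hym, if_neg (Ne.symm hmn)]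
    rw [sum_pair_eq hmn _ (fun t htm htn => by rw [givens_xn hmn ω htm htn]; simp)]
    rw [givens_mn hmn, givens_nn hmn, givens_mm, givens_nm hmn]
    rw [map_neg, map_mul (starRingEnd ℂ) cc _, conj_cc, Complex.conj_conj]
    ring
  -- case x = n₀, y = n₀
  · rw [hxn, hyn, if_pos rfl]
    rw [sum_pair_eq hmn _ (fun t htm htn => by rw [givens_xn hmn ω htm htn]; simp)]
    rw [givens_mn hmn, givens_nn hmn]
    rw [map_neg, map_mul (starRingEnd ℂ) cc _, conj_cc, Complex.conj_conj]
    calc -(cc * ω) * -(cc * (starRingEnd ℂ) ω) + cc * cc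
        = cc * cc * (ω * (starRingEnd ℂ) ω) + cc * cc := by ring
      _ = 1 := by rw [hω, hcc]; norm_num
  -- case x = n₀, y other
  · rw [hxn, if_neg (fun h : n₀ = y => hym (False.elim (hyn h.symm)))]
    rw [sum_pair_eq hmn _ (fun t htm htn => by rw [givens_xn hmn ω htm htn]; simp)]
    rw [givens_mn hmn, givens_nn hmn, givens_other ω hym hyn, givens_other ω hym hyn]
    rw [if_neg (fun h : m = y => hym h.symm), if_neg (fun h : n₀ = y => hyn h.symm)]
    simp
  -- case x other, y = m
  · rw [hym]
    rw [Finset.sum_eq_single x (fun t _ htx => by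
      rw [givens_other ω hxm hxn, if_neg htx]; simp) (fun h => absurd (Finset.mem_univ x) h)]
    rw [givens_other ω hxm hxn, if_pos rfl, givens_xm ω hxm hxn]
    rw [if_neg (fun h : x = m => hxm h)]
    simp
  -- case x other, y = n₀
  · rw [hyn]
    rw [Finset.sum_eq_single x (fun t _ htx => by
      rw [givens_other ω hxm hxn, if_neg htx]; simp) (fun h => absurd (Finset.mem_univ x) h)]
    rw [givens_other ω hxm hxn, if_pos rfl, givens_xn hmn ω hxm hxn]
    rw [if_neg (fun h : x = n₀ => hxn h)]
    simp
  -- case x other, y other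
  · rw [Finset.sum_eq_single x (fun t _ htx => by
      rw [givens_other ω hxm hxn, if_neg htx]; simp) (fun h => absurd (Finset.mem_univ x) h)]
    rw [givens_other ω hxm hxn, if_pos rfl, givens_other ω hym hyn]
    simp



theorem exists_perm_extend {hkN : k ≤ N} {j : Fin k → Fin N} (hj : Function.Injective j) :
    ∃ π : Equiv.Perm (Fin N), ∀ a, π (Fin.castLE hkN a) = j a := by
  classical
  have hc : Function.Injective (fun a : Fin k => Fin.castLE hkN a) :=
    fun a b h => Fin.castLE_injective hkN h
  let e := ((Equiv.ofInjective _ hc).symm.trans (Equiv.ofInjective j hj))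
  refine ⟨e.extendSubtype, fun a => ?_⟩
  rw [Equiv.extendSubtype_apply_of_mem e _ ⟨a, rfl⟩]
  simp [e, Equiv.ofInjective_symm_apply]

def jQfun (j : Fin k → Fin N) (n₀ : Fin N) (Q : Finset (Fin k)) : Fin k → Fin N :=
  fun a => if a ∈ Q then n₀ else j a

variable {j : Fin k → Fin N}

theorem jQ_filter (hfresh : ∀ a, j a ≠ n₀) (Q : Finset (Fin k)) :
    (Finset.univ.filter fun a => jQfun j n₀ Q a = n₀) = Q := by
  ext a
  by_cases h : a ∈ Q <;> simp [jQfun, h, hfresh a]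

theorem jQ_empty : jQfun j n₀ ∅ = j := by
  funext a; simp [jQfun]

theorem update_eq_jQ (a₂ : Fin k) : Function.update j a₂ n₀ = jQfun j n₀ {a₂} := by
  funext a
  by_cases h : a = a₂ <;> simp [jQfun, Function.update_apply, h]

theorem cnt_jQ_m (hmn : m ≠ n₀) {Q : Finset (Fin k)}
    (hQ : Q ⊆ Finset.univ.filter fun a => j a = m) :
    cnt (jQfun j n₀ Q) m + Q.card = cnt j m := by
  have hfe : (Finset.univ.filter fun a => jQfun j n₀ Q a = m)
      = (Finset.univ.filter fun a => j a = m) \ Q := by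
    ext a
    simp only [Finset.mem_filter, Finset.mem_sdiff, Finset.mem_univ, true_and]
    by_cases h : a ∈ Q
    · simp only [jQfun, h, if_pos, Finset.mem_filter, Finset.mem_univ, true_and,
        Finset.mem_sdiff]
      have := (Finset.mem_filter.mp (hQ h)).2
      simp [hmn.symm, h]
    · simp [jQfun, h]
  rw [cnt, hfe, Finset.card_sdiff_of_subset hQ, cnt]
  exact Nat.sub_add_cancel (Finset.card_le_card hQ)

theorem cnt_jQ_n (hfresh : ∀ a, j a ≠ n₀) (Q : Finset (Fin k)) :
    cnt (jQfun j n₀ Q) n₀ = Q.card := by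
  rw [cnt, jQ_filter hfresh]

theorem cnt_jQ_other (hfresh : ∀ a, j a ≠ n₀) {Q : Finset (Fin k)}
    (hQ : Q ⊆ Finset.univ.filter fun a => j a = m) {v : Fin N} (hv : v ≠ m) (hv' : v ≠ n₀) :
    cnt (jQfun j n₀ Q) v = cnt j v := by
  rw [cnt, cnt]
  congr 1
  ext a
  simp only [Finset.mem_filter, Finset.mem_univ, true_and]
  by_cases h : a ∈ Q
  · have := (Finset.mem_filter.mp (hQ h)).2
    simp [jQfun, h, hv'.symm, this, hv.symm]
  · simp [jQfun, h]

theorem cnt_fresh (hfresh : ∀ a, j a ≠ n₀) : cnt j n₀ = 0 := by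
  rw [cnt, Finset.card_eq_zero]
  ext a; simp [hfresh a]

theorem mu_split (hmn : m ≠ n₀) (f : Fin k → Fin N) :
    mu f = (cnt f m)^2 + (cnt f n₀)^2
      + ∑ v ∈ (Finset.univ.erase m).erase n₀, (cnt f v)^2 := by
  rw [mu, ← Finset.add_sum_erase _ _ (Finset.mem_univ m),
    ← Finset.add_sum_erase _ _ (Finset.mem_erase.mpr ⟨Ne.symm hmn, Finset.mem_univ n₀⟩)]
  ring

theorem mu_jQ (hmn : m ≠ n₀) (hfresh : ∀ a, j a ≠ n₀) {Q : Finset (Fin k)}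
    (hQ : Q ⊆ Finset.univ.filter fun a => j a = m)
    (hQ0 : 0 < Q.card) (hQP : Q.card < cnt j m) :
    mu (jQfun j n₀ Q) < mu j := by
  have h1 := cnt_jQ_m hmn hQ
  have h2 := cnt_jQ_n (j := j) hfresh Q
  have h3 := cnt_fresh (j := j) hfresh
  have hsplit1 := mu_split hmn (jQfun j n₀ Q)
  have hsplit2 := mu_split hmn j
  have hrest : ∑ v ∈ (Finset.univ.erase m).erase n₀, (cnt (jQfun j n₀ Q) v)^2
      = ∑ v ∈ (Finset.univ.erase m).erase n₀, (cnt j v)^2 := by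
    refine Finset.sum_congr rfl fun v hv => ?_
    rw [Finset.mem_erase, Finset.mem_erase] at hv
    rw [cnt_jQ_other hfresh hQ hv.2.1 hv.1]
  set s := cnt (jQfun j n₀ Q) m
  set q := Q.card
  have hq : s + q = cnt j m := h1
  have hs : 0 < s := by omega
  have hkey : s^2 + q^2 < (s + q)^2 := by nlinarith
  rw [hsplit1, hsplit2, hrest, h2, h3, ← hq]
  have : (0:ℕ)^2 = 0 := by norm_num
  nlinarith

theorem givens_col_m {ω : ℂ} {x : Fin N} (h : givens m n₀ ω x m ≠ 0) : x = m ∨ x = n₀ := by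
  by_cases h1 : x = m
  · exact Or.inl h1
  by_cases h2 : x = n₀
  · exact Or.inr h2
  exfalso; apply h
  unfold givens
  rw [if_pos rfl, if_neg h1, if_neg h2]

theorem givens_col_n (hmn : m ≠ n₀) {ω : ℂ} {x : Fin N} (h : givens m n₀ ω x n₀ ≠ 0) :
    x = m ∨ x = n₀ := by
  by_cases h1 : x = m
  · exact Or.inl h1
  by_cases h2 : x = n₀
  · exact Or.inr h2
  exfalso; apply h
  unfold givens
  rw [if_neg (Ne.symm hmn), if_pos rfl, if_neg h1, if_neg h2]

theorem givens_col_other {ω : ℂ} {x y : Fin N} (hym : y ≠ m) (hyn : y ≠ n₀)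
    (h : givens m n₀ ω x y ≠ 0) : x = y := by
  by_cases h1 : x = y
  · exact h1
  exfalso; apply h
  unfold givens
  rw [if_neg hym, if_neg hyn, if_neg h1]

theorem givens_expansion (hmn : m ≠ n₀) (hfresh : ∀ a, j a ≠ n₀) (ω : ℂ)
    {a₂ : Fin k} (ha₂ : j a₂ = m) (ψ : (Fin k → Fin N) → ℂ) :
    ∑ jj : Fin k → Fin N, ψ jj * ∏ a, givens m n₀ ω (jj a) (Function.update j a₂ n₀ a)
      = ∑ Q ∈ (Finset.univ.filter fun a => j a = m).powerset,
          ψ (jQfun j n₀ Q) * ((if a₂ ∈ Q then cc else -(cc * (starRingEnd ℂ) ω)) *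
            ∏ a ∈ ((Finset.univ.filter fun a => j a = m).erase a₂),
              (if a ∈ Q then cc * ω else cc)) := by
  set P := Finset.univ.filter fun a => j a = m with hP
  have ha₂P : a₂ ∈ P := Finset.mem_filter.mpr ⟨Finset.mem_univ _, ha₂⟩
  have hsub : P.powerset.image (jQfun j n₀) ⊆ Finset.univ := Finset.subset_univ _
  have hvan : ∀ jj ∈ Finset.univ, jj ∉ P.powerset.image (jQfun j n₀) →
      ψ jj * ∏ a, givens m n₀ ω (jj a) (Function.update j a₂ n₀ a) = 0 := by
    intro jj _ hjj
    rcases Classical.em (∀ a, givens m n₀ ω (jj a) (Function.update j a₂ n₀ a) ≠ 0)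
      with hprod | hex
    · exfalso
      apply hjj
      refine Finset.mem_image.mpr ⟨P.filter (fun a => jj a = n₀),
        Finset.mem_powerset.mpr (Finset.filter_subset _ _), funext fun a => ?_⟩
      by_cases haP : a ∈ P
      · have hjam : j a = m := (Finset.mem_filter.mp haP).2
        by_cases haQ : jj a = n₀
        · have : a ∈ P.filter (fun a => jj a = n₀) := Finset.mem_filter.mpr ⟨haP, haQ⟩
          rw [show jQfun j n₀ (P.filter (fun a => jj a = n₀)) a = n₀ from if_pos this]
          exact haQ.symm
        · have hnotQ : a ∉ P.filter (fun a => jj a = n₀) :=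
            fun h => haQ (Finset.mem_filter.mp h).2
          rw [show jQfun j n₀ (P.filter (fun a => jj a = n₀)) a = j a from if_neg hnotQ]
          have hcolv : Function.update j a₂ n₀ a = m ∨ Function.update j a₂ n₀ a = n₀ := by
            by_cases h : a = a₂
            · exact Or.inr (by rw [h, Function.update_self])
            · exact Or.inl (by rw [Function.update_of_ne h, hjam])
          rcases hcolv with h | h
          · rcases givens_col_m (h ▸ hprod a) with h1 | h1
            · rw [hjam, h1]
            · exact absurd h1 haQ
          · rcases givens_col_n hmn (h ▸ hprod a) with h1 | h1
            · rw [hjam, h1]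
            · exact absurd h1 haQ
      · have hja : j a ≠ m := fun h => haP (Finset.mem_filter.mpr ⟨Finset.mem_univ _, h⟩)
        have hane : a ≠ a₂ := fun h => hja (h ▸ ha₂)
        have hupd : Function.update j a₂ n₀ a = j a := Function.update_of_ne hane _ _
        have h2 : jj a = j a := by
          have := givens_col_other (x := jj a) (hupd ▸ hja) (hupd ▸ hfresh a) (hprod a)
          rw [this, hupd]
        have hnotQ : a ∉ P.filter (fun a => jj a = n₀) :=
          fun h => haP (Finset.filter_subset _ _ h)
        rw [show jQfun j n₀ (P.filter (fun a => jj a = n₀)) a = j a from if_neg hnotQ]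
        exact h2.symm
    · push_neg at hex
      obtain ⟨a, ha⟩ := hex
      exact mul_eq_zero_of_right _ (Finset.prod_eq_zero (Finset.mem_univ a) ha)
  rw [← Finset.sum_subset hsub hvan]
  rw [Finset.sum_image (fun Q1 h1 Q2 h2 heq => by
    rw [← jQ_filter (j := j) (n₀ := n₀) hfresh Q1, ← jQ_filter (j := j) (n₀ := n₀) hfresh Q2, heq])]
  refine Finset.sum_congr rfl fun Q hQ => ?_
  have hQP : Q ⊆ P := Finset.mem_powerset.mp hQ
  congr 1
  rw [← Finset.prod_mul_prod_compl P]
  have hcompl : ∏ a ∈ Pᶜ, givens m n₀ ω (jQfun j n₀ Q a) (Function.update j a₂ n₀ a) = 1 := by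
    refine Finset.prod_eq_one fun a ha => ?_
    rw [Finset.mem_compl] at ha
    have hja : j a ≠ m := fun h => ha (Finset.mem_filter.mpr ⟨Finset.mem_univ _, h⟩)
    have hane : a ≠ a₂ := fun h => hja (h ▸ ha₂)
    have haQ : a ∉ Q := fun h => ha (hQP h)
    rw [Function.update_of_ne hane, show jQfun j n₀ Q a = j a from if_neg haQ]
    unfold givens
    rw [if_neg hja, if_neg (hfresh a), if_pos rfl]
  rw [hcompl, mul_one]
  rw [← Finset.mul_prod_erase P _ ha₂P]
  congr 1
  · rw [Function.update_self]
    by_cases h : a₂ ∈ Q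
    · rw [if_pos h, show jQfun j n₀ Q a₂ = n₀ from if_pos h]
      unfold givens
      rw [if_neg (Ne.symm hmn), if_pos rfl, if_neg (Ne.symm hmn), if_pos rfl]
    · rw [if_neg h, show jQfun j n₀ Q a₂ = j a₂ from if_neg h, ha₂]
      unfold givens
      rw [if_neg (Ne.symm hmn), if_pos rfl, if_pos rfl]
  · refine Finset.prod_congr rfl fun a ha => ?_
    have haP : a ∈ P := (Finset.mem_erase.mp ha).2
    have hane : a ≠ a₂ := (Finset.mem_erase.mp ha).1
    have hjam : j a = m := (Finset.mem_filter.mp haP).2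
    rw [Function.update_of_ne hane, hjam]
    by_cases h : a ∈ Q
    · rw [if_pos h, show jQfun j n₀ Q a = n₀ from if_pos h]
      unfold givens
      rw [if_pos rfl, if_neg (Ne.symm hmn), if_pos rfl]
    · rw [if_neg h, show jQfun j n₀ Q a = j a from if_neg h, hjam]
      unfold givens
      rw [if_pos rfl, if_pos rfl]


theorem goodFun_apply_perm {hkN : k ≤ N} {φ : (Fin k → Fin N) → ℂ} (hφ : goodFun hkN φ)
    (π : Equiv.Perm (Fin N)) : φ (fun a => π (Fin.castLE hkN a)) = 0 := by
  have h := hφ (permMat π) (permMat_mem π)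
  rw [Finset.sum_eq_single (fun a => π (Fin.castLE hkN a))] at h
  · simpa [permMat] using h
  · intro jj _ hne
    obtain ⟨a, ha⟩ : ∃ a, jj a ≠ π (Fin.castLE hkN a) := by
      by_contra hc
      push_neg at hc
      exact hne (funext hc)
    exact mul_eq_zero_of_right _
      (Finset.prod_eq_zero (Finset.mem_univ a) (by simp [permMat, ha]))
  · intro h'
    exact absurd (Finset.mem_univ _) h'

theorem key_relation {hkN : k ≤ N} {φ : (Fin k → Fin N) → ℂ} (hφ : goodFun hkN φ)
    {j : Fin k → Fin N}
    (IH : ∀ ψ, goodFun hkN ψ → ∀ j'', mu j'' < mu j → ψ j'' = 0)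
    (hmn : m ≠ n₀) (hfresh : ∀ a, j a ≠ n₀) {a₂ : Fin k} (ha₂ : j a₂ = m)
    (hr : 2 ≤ cnt j m) {ω : ℂ} (hω : ω * (starRingEnd ℂ) ω = 1) :
    (starRingEnd ℂ) ω * φ j
      = ω ^ (cnt j m - 1) * φ (jQfun j n₀ (Finset.univ.filter fun a => j a = m)) := by
  classical
  set P := Finset.univ.filter fun a => j a = m with hP
  have ha₂P : a₂ ∈ P := Finset.mem_filter.mpr ⟨Finset.mem_univ _, ha₂⟩
  have hPcard : P.card = cnt j m := rfl
  set ψ' : (Fin k → Fin N) → ℂ :=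
    fun jj => ∑ j2 : Fin k → Fin N, φ j2 * ∏ a, givens m n₀ ω (j2 a) (jj a) with hψ'
  have hgood : goodFun hkN ψ' := goodFun_comp hφ _ (givens_mem hmn hω)
  have hmu' : mu (Function.update j a₂ n₀) < mu j := by
    rw [update_eq_jQ]
    refine mu_jQ hmn hfresh ?_ ?_ ?_
    · intro x hx
      rw [Finset.mem_singleton] at hx
      exact hx ▸ ha₂P
    · simp
    · simp only [Finset.card_singleton]
      omega
  have h0 : ψ' (Function.update j a₂ n₀) = 0 := IH ψ' hgood _ hmu'
  rw [hψ'] at h0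
  simp only at h0
  rw [givens_expansion hmn hfresh ω ha₂ φ] at h0
  have hPne : P.Nonempty := Finset.card_pos.mp (by omega)
  have hsub2 : ({∅, P} : Finset (Finset (Fin k))) ⊆ P.powerset := by
    intro Q hQ
    rcases Finset.mem_insert.mp hQ with rfl | hQ
    · exact Finset.mem_powerset.mpr (Finset.empty_subset _)
    · rw [Finset.mem_singleton] at hQ
      exact hQ ▸ Finset.mem_powerset.mpr (Finset.Subset.refl _)
  have hvan2 : ∀ Q ∈ P.powerset, Q ∉ ({∅, P} : Finset (Finset (Fin k))) →
      φ (jQfun j n₀ Q) * ((if a₂ ∈ Q then cc else -(cc * (starRingEnd ℂ) ω)) *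
        ∏ a ∈ P.erase a₂, (if a ∈ Q then cc * ω else cc)) = 0 := by
    intro Q hQ hQne
    have hQP : Q ⊆ P := Finset.mem_powerset.mp hQ
    have hQ1 : Q ≠ ∅ := fun h => hQne (by rw [h]; exact Finset.mem_insert_self _ _)
    have hQ2 : Q ≠ P := fun h => hQne (by
      rw [h]; exact Finset.mem_insert.mpr (Or.inr (Finset.mem_singleton_self _)))
    have hc1 : 0 < Q.card := Finset.card_pos.mpr (Finset.nonempty_of_ne_empty hQ1)
    have hc2 : Q.card < cnt j m := by
      rw [← hPcard]
      exact Finset.card_lt_card (Finset.ssubset_iff_subset_ne.mpr ⟨hQP, hQ2⟩)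
    rw [IH φ hφ _ (mu_jQ hmn hfresh hQP hc1 hc2), zero_mul]
  rw [← Finset.sum_subset hsub2 hvan2] at h0
  have hne : (∅ : Finset (Fin k)) ≠ P := fun h => hPne.ne_empty h.symm
  rw [Finset.sum_insert (by simpa using hne), Finset.sum_singleton] at h0
  have hr1 : (P.erase a₂).card = cnt j m - 1 := by
    rw [Finset.card_erase_of_mem ha₂P, hPcard]
  have hterm1 : (if a₂ ∈ (∅ : Finset (Fin k)) then cc else -(cc * (starRingEnd ℂ) ω)) *
      ∏ a ∈ P.erase a₂, (if a ∈ (∅ : Finset (Fin k)) then cc * ω else cc)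
      = -(cc * (starRingEnd ℂ) ω) * cc ^ (cnt j m - 1) := by
    simp only [Finset.notMem_empty, if_false, Finset.prod_const, hr1]
  have hterm2 : (if a₂ ∈ P then cc else -(cc * (starRingEnd ℂ) ω)) *
      ∏ a ∈ P.erase a₂, (if a ∈ P then cc * ω else cc)
      = cc * (cc * ω) ^ (cnt j m - 1) := by
    rw [if_pos ha₂P]
    congr 1
    rw [Finset.prod_congr rfl (fun a ha => if_pos ((Finset.mem_erase.mp ha).2)),
      Finset.prod_const, hr1]
  rw [hterm1, hterm2, jQ_empty] at h0
  have hccpow : (cc * cc ^ (cnt j m - 1)) ≠ 0 :=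
    mul_ne_zero cc_ne_zero (pow_ne_zero _ cc_ne_zero)
  have halg : ((starRingEnd ℂ) ω * φ j - ω ^ (cnt j m - 1) * φ (jQfun j n₀ P))
      * (cc * cc ^ (cnt j m - 1)) = 0 := by
    rw [mul_pow] at h0
    linear_combination -h0
  rcases mul_eq_zero.mp halg with h | h
  · linear_combination h
  · exact absurd h hccpow

theorem goodFun_eq_zero_aux (hkN : k ≤ N) :
    ∀ n (φ : (Fin k → Fin N) → ℂ), goodFun hkN φ → ∀ j : Fin k → Fin N, mu j = n → φ j = 0 := by
  intro n
  induction n using Nat.strong_induction_on with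
  | _ n IH =>
    intro φ hφ j hj
    by_cases hinj : Function.Injective j
    · obtain ⟨π, hπ⟩ := exists_perm_extend (hkN := hkN) hinj
      have h := goodFun_apply_perm hφ π
      rwa [show (fun a => π (Fin.castLE hkN a)) = j from funext hπ] at h
    · obtain ⟨a₂, b, hab, hne⟩ := Function.not_injective_iff.mp hinj
      set m := j a₂ with hm
      have hr : 2 ≤ cnt j m := by
        rw [cnt]
        refine Finset.one_lt_card.mpr ⟨a₂, ?_, b, ?_, hne⟩
        · simp [hm]
        · simp [hab.symm]
      have hfresh : ∃ n₀ : Fin N, ∀ a, j a ≠ n₀ := by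
        by_contra hc
        push_neg at hc
        have hsurj : Function.Surjective j := fun v => by
          obtain ⟨a, ha⟩ := hc v
          exact ⟨a, ha⟩
        have hbij : Function.Bijective j := (Fintype.bijective_iff_surjective_and_card j).mpr
          ⟨hsurj, by
            have hcard : Fintype.card (Fin N) ≤ Fintype.card (Fin k) :=
              Fintype.card_le_of_surjective j hsurj
            simp only [Fintype.card_fin] at hcard ⊢
            omega⟩
        exact hinj hbij.1
      obtain ⟨n₀, hn₀⟩ := hfresh
      have hmn : m ≠ n₀ := hn₀ a₂
      have IH' : ∀ ψ, goodFun hkN ψ → ∀ j'', mu j'' < mu j → ψ j'' = 0 :=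
        fun ψ hψ j'' hlt => IH (mu j'') (hj ▸ hlt) ψ hψ j'' rfl
      have h1 := key_relation hφ IH' hmn hn₀ hm.symm hr (ω := 1) (by simp)
      set r := cnt j m with hrdef
      set ω₀ : ℂ := Complex.exp (Real.pi * Complex.I / r) with hω₀def
      have hrne : (r : ℂ) ≠ 0 := by
        simp only [Ne, Nat.cast_eq_zero]
        omega
      have hω₀ : ω₀ * (starRingEnd ℂ) ω₀ = 1 := by
        rw [hω₀def, ← Complex.exp_conj, ← Complex.exp_add]
        have harg : (Real.pi : ℂ) * Complex.I / r
            + (starRingEnd ℂ) ((Real.pi : ℂ) * Complex.I / r) = 0 := by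
          rw [map_div₀, _root_.map_mul, Complex.conj_I, Complex.conj_ofReal, _root_.map_natCast]
          ring
        rw [harg, Complex.exp_zero]
      have hpow : ω₀ ^ r = -1 := by
        rw [hω₀def, ← Complex.exp_nat_mul]
        rw [show (r : ℂ) * ((Real.pi : ℂ) * Complex.I / r) = Real.pi * Complex.I by
          rw [mul_comm, div_mul_cancel₀ _ hrne]]
        exact Complex.exp_pi_mul_I
      have h2 := key_relation hφ IH' hmn hn₀ hm.symm hr (ω := ω₀) hω₀
      simp only [_root_.map_one, one_mul, one_pow] at h1
      have h3 : ω₀ * ((starRingEnd ℂ) ω₀ * φ j)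
          = ω₀ * (ω₀ ^ (r - 1) * φ (jQfun j n₀ (Finset.univ.filter fun a => j a = m))) := by
        rw [h2]
      rw [← mul_assoc, hω₀, one_mul, ← mul_assoc, ← pow_succ'] at h3
      rw [show r - 1 + 1 = r by omega, hpow] at h3
      rw [← h1] at h3
      have h4 : (2 : ℂ) * φ j = 0 := by linear_combination h3
      have h2ne : (2 : ℂ) ≠ 0 := by norm_num
      rcases mul_eq_zero.mp h4 with h | h
      · exact absurd h h2ne
      · exact h

theorem goodFun_zero {hkN : k ≤ N} {φ : (Fin k → Fin N) → ℂ} (hφ : goodFun hkN φ)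
    (j : Fin k → Fin N) : φ j = 0 :=
  goodFun_eq_zero_aux hkN (mu j) φ hφ j rfl


theorem zeta_pow_eq_one {kk e : ℕ} (he : e ≤ 2 * kk)
    (h : Complex.exp (2 * Real.pi * Complex.I / (2 * kk + 1)) ^ e = 1) : e = 0 := by
  rw [← Complex.exp_nat_mul, Complex.exp_eq_one_iff] at h
  obtain ⟨n, hn⟩ := h
  have hKne : (2 * (kk:ℂ) + 1) ≠ 0 := by
    have h0 : ((2 * kk + 1 : ℕ) : ℂ) ≠ 0 := Nat.cast_ne_zero.mpr (by omega)
    push_cast at h0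
    exact h0
  have hwne : (2 * (Real.pi : ℂ) * Complex.I) ≠ 0 := by
    refine mul_ne_zero (mul_ne_zero two_ne_zero ?_) Complex.I_ne_zero
    exact_mod_cast Real.pi_ne_zero
  have h3 := congrArg (fun x : ℂ => x * (2 * (kk:ℂ) + 1)) hn
  rw [mul_assoc, div_mul_cancel₀ _ hKne] at h3
  have h2 : (e : ℂ) = (n : ℂ) * (2 * (kk:ℂ) + 1) :=
    mul_right_cancel₀ hwne (h3.trans (by ring))
  have h4 : (e : ℤ) = n * (2 * kk + 1) := by exact_mod_cast h2
  have h5 : (e : ℤ) ≤ 2 * kk := by exact_mod_cast he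
  have h6 : (0 : ℤ) ≤ e := Int.ofNat_nonneg e
  rcases lt_trichotomy n 0 with hcase | hcase | hcase
  · nlinarith
  · rw [hcase] at h4
    simp at h4
    exact_mod_cast h4
  · nlinarith

theorem cnt_le (j : Fin k → Fin N) (v : Fin N) : cnt j v ≤ k := by
  rw [cnt]
  exact le_trans (Finset.card_filter_le _ _) (by simp)

theorem delta_left (σ : Equiv.Perm (Fin k)) (i j : Fin k → Fin N)
    (V : Matrix (Fin N) (Fin N) ℂ) :
    ∑ p : Fin k → Fin N, (∏ a, if i (σ a) = p a then (1:ℂ) else 0) * ∏ a, V (p a) (j a)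
      = ∏ a, V (i (σ a)) (j a) := by
  rw [Finset.sum_eq_single (fun a => i (σ a))]
  · simp
  · intro p _ hne
    obtain ⟨a, ha⟩ : ∃ a, i (σ a) ≠ p a := by
      by_contra hc
      push_neg at hc
      exact hne (funext fun a => (hc a).symm)
    exact mul_eq_zero_of_left
      (Finset.prod_eq_zero (Finset.mem_univ a)
        (if_neg ha : (if i (σ a) = p a then (1:ℂ) else 0) = 0)) _
  · intro h
    exact absurd (Finset.mem_univ _) h

theorem delta_right (σ : Equiv.Perm (Fin k)) (i j : Fin k → Fin N)
    (V : Matrix (Fin N) (Fin N) ℂ) :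
    ∑ p : Fin k → Fin N, (∏ a, V (i a) (p a)) * (∏ a, if p (σ a) = j a then (1:ℂ) else 0)
      = ∏ a, V (i (σ a)) (j a) := by
  rw [Finset.sum_eq_single (fun a => j (σ⁻¹ a))]
  · have h1 : ∏ a, (if j (σ⁻¹ (σ a)) = j a then (1:ℂ) else 0) = 1 := by
      refine Finset.prod_eq_one fun a _ => ?_
      rw [if_pos (by rw [Equiv.Perm.coe_inv, Equiv.symm_apply_apply])]
    rw [h1, mul_one]
    have h2 := Equiv.prod_comp σ (fun a => V (i a) (j (σ⁻¹ a)))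
    calc ∏ a, V (i a) (j (σ⁻¹ a)) = ∏ a, V (i (σ a)) (j (σ⁻¹ (σ a))) := h2.symm
      _ = ∏ a, V (i (σ a)) (j a) := by
          refine Finset.prod_congr rfl fun a _ => ?_
          rw [Equiv.Perm.coe_inv, Equiv.symm_apply_apply]
  · intro p _ hne
    obtain ⟨b, hb⟩ : ∃ b, p b ≠ j (σ⁻¹ b) := by
      by_contra hc
      push_neg at hc
      exact hne (funext hc)
    refine mul_eq_zero_of_right _ (Finset.prod_eq_zero (Finset.mem_univ (σ⁻¹ b)) ?_)
    rw [if_neg]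
    rw [Equiv.Perm.coe_inv, Equiv.apply_symm_apply]
    exact hb
  · intro h
    exact absurd (Finset.mem_univ _) h

theorem cnt_comp_perm (f : Fin k → Fin N) (π : Equiv.Perm (Fin k)) (v : Fin N) :
    cnt (fun a => f (π a)) v = cnt f v := by
  rw [cnt, cnt]
  exact Finset.card_bij (fun a _ => π a)
    (fun a ha => by simpa using (Finset.mem_filter.mp ha).2)
    (fun a ha b hb hab => π.injective hab)
    (fun b hb => ⟨π⁻¹ b, by simpa using (Finset.mem_filter.mp hb).2, by simp⟩)

theorem cnt_cast_le_one (hkN : k ≤ N) (v : Fin N) :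
    cnt (fun a => Fin.castLE hkN a) v ≤ 1 := by
  rw [cnt]
  refine Finset.card_le_one.mpr fun a ha b hb => ?_
  rw [Finset.mem_filter] at ha hb
  exact Fin.castLE_injective hkN (ha.2.trans hb.2.symm)

theorem perm_of_cnt_eq (hkN : k ≤ N) {i : Fin k → Fin N}
    (h : ∀ v, cnt i v = cnt (fun a => Fin.castLE hkN a) v) :
    ∃ τ : Equiv.Perm (Fin k), i = fun a => Fin.castLE hkN (τ a) := by
  have hbound : ∀ a, (i a : ℕ) < k := by
    intro a
    by_contra hc
    push_neg at hc
    have h1 : 1 ≤ cnt i (i a) := by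
      rw [cnt]
      exact Finset.card_pos.mpr ⟨a, by simp⟩
    have h2 : cnt (fun a => Fin.castLE hkN a) (i a) = 0 := by
      rw [cnt, Finset.card_eq_zero]
      ext b
      simp only [Finset.mem_filter, Finset.mem_univ, true_and, Finset.notMem_empty, iff_false]
      intro hb
      have : ((Fin.castLE hkN b : Fin N) : ℕ) = (i a : ℕ) := by rw [hb]
      simp at this
      omega
    rw [h (i a), h2] at h1
    omega
  have hinj : Function.Injective i := by
    intro a b hab
    by_contra hne
    have h2 : 2 ≤ cnt i (i a) := by
      rw [cnt]
      exact Finset.one_lt_card.mpr ⟨a, by simp, b, by simp [hab.symm], hne⟩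
    have := h (i a)
    have h3 := cnt_cast_le_one hkN (i a)
    omega
  let τ0 : Fin k → Fin k := fun a => ⟨(i a : ℕ), hbound a⟩
  have hτ0inj : Function.Injective τ0 := by
    intro a b hab
    apply hinj
    have h0 : (τ0 a).val = (τ0 b).val := congrArg Fin.val hab
    simp only [τ0] at h0
    exact Fin.ext h0
  refine ⟨Equiv.ofBijective τ0 (Finite.injective_iff_bijective.mp hτ0inj), funext fun a => ?_⟩
  simp only [Equiv.ofBijective_apply]
  exact Fin.ext (by simp [τ0])


end WgAux

instance unitaryBorel (N : ℕ) : BorelSpace (Matrix.unitaryGroup (Fin N) ℂ) :=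
  Subtype.borelSpace (Matrix.unitaryGroup (Fin N) ℂ : Set (Matrix (Fin N) (Fin N) ℂ))

namespace WgP2

variable {N k : ℕ} (M : ℕ) (ν : Measure (Matrix.unitaryGroup (Fin N) ℂ))

/-- The conjugation map. -/
noncomputable def Fmap (M : ℕ) (U : Matrix.unitaryGroup (Fin N) ℂ) :
    Matrix (Fin N) (Fin N) ℂ :=
  (U : Matrix (Fin N) (Fin N) ℂ) * IMN M N * star (U : Matrix (Fin N) (Fin N) ℂ)

theorem contFmap : Continuous (Fmap (N := N) M) := by
  have h1 : Continuous (fun U : Matrix.unitaryGroup (Fin N) ℂ =>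
      (U : Matrix (Fin N) (Fin N) ℂ)) := continuous_subtype_val
  have h2 : Continuous (fun U : Matrix.unitaryGroup (Fin N) ℂ =>
      star (U : Matrix (Fin N) (Fin N) ℂ)) := by
    simp only [Matrix.star_eq_conjTranspose]
    exact h1.matrix_conjTranspose
  exact (h1.matrix_mul continuous_const).matrix_mul h2

theorem measFmap : Measurable (Fmap (N := N) M) := (contFmap M).measurable

theorem contProd (i j : Fin k → Fin N) :
    Continuous (fun S : Matrix (Fin N) (Fin N) ℂ => ∏ a : Fin k, S (i a) (j a)) :=
  continuous_finset_prod _ fun a _ => continuous_id.matrix_elem _ _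

/-- entries of a unitary matrix have absolute value at most 1 -/
theorem unitary_entry_le (U : Matrix.unitaryGroup (Fin N) ℂ) (x s : Fin N) :
    ‖(U : Matrix (Fin N) (Fin N) ℂ) x s‖ ≤ 1 := by
  have hU : (U : Matrix (Fin N) (Fin N) ℂ) * star (U : Matrix (Fin N) (Fin N) ℂ) = 1 :=
    (Unitary.mem_iff.mp U.2).2
  have h : ((U : Matrix (Fin N) (Fin N) ℂ) * star (U : Matrix (Fin N) (Fin N) ℂ)) x x
      = (1 : Matrix (Fin N) (Fin N) ℂ) x x := by rw [hU]
  rw [Matrix.mul_apply, Matrix.one_apply_eq] at h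
  have h2 : ∀ t, (U : Matrix (Fin N) (Fin N) ℂ) x t * star (U : Matrix (Fin N) (Fin N) ℂ) t x
      = (Complex.normSq ((U : Matrix (Fin N) (Fin N) ℂ) x t) : ℂ) := by
    intro t
    rw [Matrix.star_apply, ← Complex.mul_conj]; rfl
  simp_rw [h2] at h
  have h3 : ∑ t, Complex.normSq ((U : Matrix (Fin N) (Fin N) ℂ) x t) = 1 := by
    have := congrArg Complex.re h
    simpa using this
  have h4 : Complex.normSq ((U : Matrix (Fin N) (Fin N) ℂ) x s) ≤ 1 := by
    rw [← h3]
    exact Finset.single_le_sum (fun t _ => Complex.normSq_nonneg _) (Finset.mem_univ s)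
  have h5 : (‖(U : Matrix (Fin N) (Fin N) ℂ) x s‖)^2 ≤ 1 := by
    rw [Complex.sq_norm]; exact h4
  nlinarith [norm_nonneg ((U : Matrix (Fin N) (Fin N) ℂ) x s)]

theorem Fmap_entry_le (U : Matrix.unitaryGroup (Fin N) ℂ) (x y : Fin N) :
    ‖Fmap M U x y‖ ≤ N := by
  have hentry : Fmap M U x y
      = ∑ t, (U : Matrix (Fin N) (Fin N) ℂ) x t
          * ((if (t : ℕ) < M then (1:ℂ) else 0)
            * (starRingEnd ℂ) ((U : Matrix (Fin N) (Fin N) ℂ) y t)) := by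
    rw [Fmap, IMN, Matrix.mul_assoc, Matrix.mul_apply]
    refine Finset.sum_congr rfl fun t _ => ?_
    rw [Matrix.diagonal_mul, Matrix.star_apply]
    rfl
  rw [hentry]
  calc ‖∑ t, (U : Matrix (Fin N) (Fin N) ℂ) x t
          * ((if (t : ℕ) < M then (1:ℂ) else 0)
            * (starRingEnd ℂ) ((U : Matrix (Fin N) (Fin N) ℂ) y t))‖
      ≤ ∑ t, ‖(U : Matrix (Fin N) (Fin N) ℂ) x t
          * ((if (t : ℕ) < M then (1:ℂ) else 0)
            * (starRingEnd ℂ) ((U : Matrix (Fin N) (Fin N) ℂ) y t))‖ := by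
        exact norm_sum_le _ _
    _ ≤ ∑ _t : Fin N, 1 := by
        refine Finset.sum_le_sum fun t _ => ?_
        rw [norm_mul, norm_mul]
        have h1 := unitary_entry_le U x t
        have h2 := unitary_entry_le U y t
        have h3 : ‖if (t : ℕ) < M then (1:ℂ) else 0‖ ≤ 1 := by
          split <;> simp
        have h4 : ‖(starRingEnd ℂ) ((U : Matrix (Fin N) (Fin N) ℂ) y t)‖ ≤ 1 := by
          rwa [Complex.norm_conj]
        have hin : ‖if (t : ℕ) < M then (1:ℂ) else 0‖
            * ‖(starRingEnd ℂ) ((U : Matrix (Fin N) (Fin N) ℂ) y t)‖ ≤ 1 := by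
          calc _ ≤ 1 * 1 := mul_le_mul h3 h4 (norm_nonneg _) zero_le_one
          _ = 1 := mul_one 1
        calc ‖(U : Matrix (Fin N) (Fin N) ℂ) x t‖
            * (‖if (t : ℕ) < M then (1:ℂ) else 0‖
              * ‖(starRingEnd ℂ) ((U : Matrix (Fin N) (Fin N) ℂ) y t)‖)
            ≤ 1 * 1 := mul_le_mul h1 hin
              (mul_nonneg (norm_nonneg _) (norm_nonneg _)) zero_le_one
          _ = 1 := mul_one 1
    _ = N := by simp

theorem sum_prod_eq' (f : Fin k → Fin N → ℂ) :
    ∑ j : Fin k → Fin N, ∏ a : Fin k, f a (j a) = ∏ a : Fin k, ∑ x : Fin N, f a x := by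
  rw [Finset.prod_univ_sum, Fintype.piFinset_univ]

theorem alg1 (S V : Matrix (Fin N) (Fin N) ℂ) (i j : Fin k → Fin N) :
    ∑ p : Fin k → Fin N, (∏ a, S (i a) (p a)) * ∏ a, V (p a) (j a)
      = ∏ a, (S * V) (i a) (j a) := by
  simp_rw [← Finset.prod_mul_distrib]
  rw [sum_prod_eq' (fun a x => S (i a) x * V x (j a))]
  exact Finset.prod_congr rfl fun a _ => (Matrix.mul_apply).symm

theorem alg2 (V S : Matrix (Fin N) (Fin N) ℂ) (i j : Fin k → Fin N) :
    ∑ p : Fin k → Fin N, (∏ a, V (i a) (p a)) * ∏ a, S (p a) (j a)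
      = ∏ a, (V * S) (i a) (j a) := by
  simp_rw [← Finset.prod_mul_distrib]
  rw [sum_prod_eq' (fun a x => V (i a) x * S x (j a))]
  exact Finset.prod_congr rfl fun a _ => (Matrix.mul_apply).symm

theorem integrable_prodF [IsProbabilityMeasure ν] (i p : Fin k → Fin N) :
    Integrable (fun U => ∏ a : Fin k, Fmap M U (i a) (p a)) ν := by
  have hc : Continuous fun U => ∏ a : Fin k, Fmap M U (i a) (p a) :=
    continuous_finset_prod _ fun a _ => (contFmap M).matrix_elem _ _
  refine Integrable.mono' (integrable_const ((N:ℝ)^k)) hc.aestronglyMeasurable ?_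
  refine Filter.Eventually.of_forall fun U => ?_
  rw [norm_prod]
  calc ∏ a : Fin k, ‖Fmap M U (i a) (p a)‖
      ≤ ∏ _a : Fin k, (N:ℝ) :=
        Finset.prod_le_prod (fun a _ => norm_nonneg _)
          (fun a _ => Fmap_entry_le M U _ _)
    _ = (N:ℝ)^k := by rw [Finset.prod_const, Finset.card_univ, Fintype.card_fin]

theorem T_def (i p : Fin k → Fin N) :
    ∫ S, ∏ a : Fin k, S (i a) (p a) ∂(grassMeasure M ν)
      = ∫ U, ∏ a : Fin k, Fmap M U (i a) (p a) ∂ν := by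
  have hgm : grassMeasure M ν = Measure.map (Fmap (N := N) M) ν := rfl
  rw [hgm, integral_map (measFmap M).aemeasurable
    ((contProd i p).aestronglyMeasurable)]

theorem int_conj_inv [hinv : ν.IsMulLeftInvariant]
    (V : Matrix.unitaryGroup (Fin N) ℂ) (g : Matrix (Fin N) (Fin N) ℂ → ℂ) :
    ∫ U, g (Fmap M (V * U)) ∂ν = ∫ U, g (Fmap M U) ∂ν :=
  integral_mul_left_eq_self (fun U => g (Fmap M U)) V

theorem Fmap_mul (V U : Matrix.unitaryGroup (Fin N) ℂ) :
    Fmap M (V * U) = (V : Matrix (Fin N) (Fin N) ℂ) * Fmap M U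
      * star (V : Matrix (Fin N) (Fin N) ℂ) := by
  rw [Fmap, Fmap, Matrix.UnitaryGroup.mul_val, star_mul]
  simp only [Matrix.mul_assoc]

theorem T_INV [IsProbabilityMeasure ν] [hinv : ν.IsMulLeftInvariant]
    (V : Matrix.unitaryGroup (Fin N) ℂ) (i j : Fin k → Fin N) :
    ∑ p : Fin k → Fin N, (∫ U, ∏ a : Fin k, Fmap M U (i a) (p a) ∂ν)
        * ∏ a, (V : Matrix (Fin N) (Fin N) ℂ) (p a) (j a)
      = ∑ p : Fin k → Fin N, (∏ a, (V : Matrix (Fin N) (Fin N) ℂ) (i a) (p a))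
        * ∫ U, ∏ a : Fin k, Fmap M U (p a) (j a) ∂ν := by
  have hstar : star (V : Matrix (Fin N) (Fin N) ℂ) * (V : Matrix (Fin N) (Fin N) ℂ) = 1 :=
    (Unitary.mem_iff.mp V.2).1
  have lhs_eq : ∑ p : Fin k → Fin N, (∫ U, ∏ a : Fin k, Fmap M U (i a) (p a) ∂ν)
        * ∏ a, (V : Matrix (Fin N) (Fin N) ℂ) (p a) (j a)
      = ∫ U, ∏ a, (Fmap M U * (V : Matrix (Fin N) (Fin N) ℂ)) (i a) (j a) ∂ν := by
    simp_rw [← MeasureTheory.integral_mul_const]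
    rw [← integral_finset_sum _ (fun p _ => (integrable_prodF M ν i p).mul_const _)]
    refine integral_congr_ae (Filter.Eventually.of_forall fun U => ?_)
    exact alg1 (Fmap M U) _ i j
  have rhs_eq : ∑ p : Fin k → Fin N, (∏ a, (V : Matrix (Fin N) (Fin N) ℂ) (i a) (p a))
        * ∫ U, ∏ a : Fin k, Fmap M U (p a) (j a) ∂ν
      = ∫ U, ∏ a, ((V : Matrix (Fin N) (Fin N) ℂ) * Fmap M U) (i a) (j a) ∂ν := by
    simp_rw [← MeasureTheory.integral_const_mul]
    rw [← integral_finset_sum _ (fun p _ => (integrable_prodF M ν p j).const_mul _)]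
    refine integral_congr_ae (Filter.Eventually.of_forall fun U => ?_)
    exact alg2 _ (Fmap M U) i j
  rw [lhs_eq, rhs_eq]
  have key := int_conj_inv M ν V
    (fun S => ∏ a, (S * (V : Matrix (Fin N) (Fin N) ℂ)) (i a) (j a))
  rw [← key]
  refine integral_congr_ae (Filter.Eventually.of_forall fun U => ?_)
  simp only [Fmap_mul]
  congr 1
  rw [Matrix.mul_assoc, Matrix.mul_assoc, hstar, Matrix.mul_one]

theorem diag_mem (z : Fin N → ℂ) (hz : ∀ v, z v * (starRingEnd ℂ) (z v) = 1) :
    Matrix.diagonal z ∈ Matrix.unitaryGroup (Fin N) ℂ := by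
  rw [Matrix.mem_unitaryGroup_iff]
  rw [Matrix.star_eq_conjTranspose, Matrix.diagonal_conjTranspose,
    Matrix.diagonal_mul_diagonal]
  have hfun : (fun v => z v * (star z) v) = fun _ => (1:ℂ) := funext fun v => by
    simpa using hz v
  rw [hfun]
  exact Matrix.diagonal_one

theorem T_diag [IsProbabilityMeasure ν] [hinv : ν.IsMulLeftInvariant]
    (z : Fin N → ℂ) (hz : ∀ v, z v * (starRingEnd ℂ) (z v) = 1) (i j : Fin k → Fin N) :
    ∫ U, ∏ a : Fin k, Fmap M U (i a) (j a) ∂ν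
      = (∏ a, z (i a) * (starRingEnd ℂ) (z (j a)))
        * ∫ U, ∏ a : Fin k, Fmap M U (i a) (j a) ∂ν := by
  set D : Matrix.unitaryGroup (Fin N) ℂ := ⟨Matrix.diagonal z, diag_mem z hz⟩ with hD
  have key := int_conj_inv M ν D (fun S => ∏ a, S (i a) (j a))
  have hDval : (D : Matrix (Fin N) (Fin N) ℂ) = Matrix.diagonal z := rfl
  have hentry : ∀ U (x y : Fin N), Fmap M (D * U) x y
      = z x * Fmap M U x y * (starRingEnd ℂ) (z y) := by
    intro U x y
    rw [Fmap_mul, hDval]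
    rw [Matrix.star_eq_conjTranspose, Matrix.diagonal_conjTranspose]
    rw [Matrix.mul_diagonal, Matrix.diagonal_mul]
    rfl
  calc ∫ U, ∏ a : Fin k, Fmap M U (i a) (j a) ∂ν
      = ∫ U, ∏ a : Fin k, Fmap M (D * U) (i a) (j a) ∂ν := key.symm
    _ = ∫ U, (∏ a, z (i a) * (starRingEnd ℂ) (z (j a)))
          * ∏ a : Fin k, Fmap M U (i a) (j a) ∂ν := by
        refine integral_congr_ae (Filter.Eventually.of_forall fun U => ?_)
        simp_rw [hentry U]
        rw [← Finset.prod_mul_distrib]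
        refine Finset.prod_congr rfl fun a _ => ?_
        ring
    _ = (∏ a, z (i a) * (starRingEnd ℂ) (z (j a)))
          * ∫ U, ∏ a : Fin k, Fmap M U (i a) (j a) ∂ν := by
        rw [MeasureTheory.integral_const_mul]



variable {N k : ℕ} (M : ℕ) (ν : Measure (Matrix.unitaryGroup (Fin N) ℂ))

/-- the basic integral -/
noncomputable def Tfun (i j : Fin k → Fin N) : ℂ :=
  ∫ U, ∏ a : Fin k, Fmap M U (i a) (j a) ∂ν

noncomputable def Wfun (hkN : k ≤ N) (σ : Equiv.Perm (Fin k)) : ℂ :=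
  Tfun M ν (fun a => Fin.castLE hkN a) (fun a => Fin.castLE hkN (σ a))

noncomputable def Rfun (hkN : k ≤ N) (i j : Fin k → Fin N) : ℂ :=
  Tfun M ν i j - ∑ σ : Equiv.Perm (Fin k),
    (∏ a : Fin k, if i (σ a) = j a then (1:ℂ) else 0) * Wfun M ν hkN σ

theorem T_reindex (i j : Fin k → Fin N) (π : Equiv.Perm (Fin k)) :
    Tfun M ν (fun a => i (π a)) (fun a => j (π a)) = Tfun M ν i j := by
  rw [Tfun, Tfun]
  refine integral_congr_ae (Filter.Eventually.of_forall fun U => ?_)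
  exact Equiv.prod_comp π (fun a => Fmap M U (i a) (j a))

theorem T_weight [IsProbabilityMeasure ν] [ν.IsMulLeftInvariant] (i j : Fin k → Fin N)
    {v : Fin N} (hv : WgAux.cnt i v ≠ WgAux.cnt j v) :
    Tfun M ν i j = 0 := by
  classical
  by_contra hT
  set ζ : ℂ := Complex.exp (2 * Real.pi * Complex.I / (2 * k + 1)) with hζ
  have hζne : ζ ≠ 0 := Complex.exp_ne_zero _
  have hζc : ζ * (starRingEnd ℂ) ζ = 1 := by
    rw [hζ, ← Complex.exp_conj, ← Complex.exp_add]
    have harg : (2 * (Real.pi:ℂ) * Complex.I / (2 * (k:ℂ) + 1))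
        + (starRingEnd ℂ) (2 * (Real.pi:ℂ) * Complex.I / (2 * (k:ℂ) + 1)) = 0 := by
      rw [map_div₀, _root_.map_mul, _root_.map_mul, Complex.conj_I, Complex.conj_ofReal]
      rw [_root_.map_add, _root_.map_mul, _root_.map_one, _root_.map_natCast]
      rw [show (starRingEnd ℂ) 2 = 2 from Complex.conj_ofNat 2]
      ring
    rw [harg, Complex.exp_zero]
  set z : Fin N → ℂ := fun u => if u = v then ζ else 1 with hzdef
  have hz : ∀ u, z u * (starRingEnd ℂ) (z u) = 1 := by
    intro u
    by_cases h : u = v <;> simp [hzdef, h, hζc]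
  have hdiag := T_diag M ν z hz i j
  have hzi : (∏ a, z (i a)) = ζ ^ WgAux.cnt i v := by
    rw [show (fun a : Fin k => z (i a)) = fun a => if i a = v then ζ else 1 from rfl]
    rw [Finset.prod_ite, Finset.prod_const, Finset.prod_const_one, mul_one]
    rfl
  have hzj : (∏ a, (starRingEnd ℂ) (z (j a))) = ((starRingEnd ℂ) ζ) ^ WgAux.cnt j v := by
    have hstep : (fun a : Fin k => (starRingEnd ℂ) (z (j a)))
        = fun a => if j a = v then (starRingEnd ℂ) ζ else 1 := by
      funext a
      by_cases h : j a = v <;> simp [hzdef, h]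
    rw [hstep, Finset.prod_ite, Finset.prod_const, Finset.prod_const_one, mul_one]
    rfl
  have hprod : (∏ a, z (i a) * (starRingEnd ℂ) (z (j a)))
      = ζ ^ WgAux.cnt i v * ((starRingEnd ℂ) ζ) ^ WgAux.cnt j v := by
    rw [Finset.prod_mul_distrib, hzi, hzj]
  rw [hprod] at hdiag
  have hdiag2 : Tfun M ν i j = ζ ^ WgAux.cnt i v * ((starRingEnd ℂ) ζ) ^ WgAux.cnt j v
      * Tfun M ν i j := hdiag
  have hfac : ζ ^ WgAux.cnt i v * ((starRingEnd ℂ) ζ) ^ WgAux.cnt j v = 1 := by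
    have h5 : (ζ ^ WgAux.cnt i v * ((starRingEnd ℂ) ζ) ^ WgAux.cnt j v - 1)
        * Tfun M ν i j = 0 := by linear_combination - hdiag2
    rcases mul_eq_zero.mp h5 with h | h
    · linear_combination h
    · exact absurd h hT
  have hinvζ : (starRingEnd ℂ) ζ = ζ⁻¹ :=
    eq_inv_of_mul_eq_one_left (by linear_combination hζc)
  rw [hinvζ, inv_pow] at hfac
  have heq : ζ ^ WgAux.cnt i v = ζ ^ WgAux.cnt j v :=
    (mul_inv_eq_one₀ (pow_ne_zero _ hζne)).mp hfac
  have hci : WgAux.cnt i v ≤ k := WgAux.cnt_le i v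
  have hcj : WgAux.cnt j v ≤ k := WgAux.cnt_le j v
  rcases le_total (WgAux.cnt i v) (WgAux.cnt j v) with hle | hle
  · have hsplit : ζ ^ WgAux.cnt j v
        = ζ ^ WgAux.cnt i v * ζ ^ (WgAux.cnt j v - WgAux.cnt i v) := by
      rw [← pow_add]
      congr 1
      omega
    have h1 : ζ ^ WgAux.cnt i v * 1 = ζ ^ WgAux.cnt i v
        * ζ ^ (WgAux.cnt j v - WgAux.cnt i v) := by
      rw [mul_one]
      nth_rewrite 1 [heq]
      exact hsplit
    have h2 := mul_left_cancel₀ (pow_ne_zero _ hζne) h1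
    have h3 := WgAux.zeta_pow_eq_one (kk := k)
      (e := WgAux.cnt j v - WgAux.cnt i v) (by omega) h2.symm
    omega
  · have hsplit : ζ ^ WgAux.cnt i v
        = ζ ^ WgAux.cnt j v * ζ ^ (WgAux.cnt i v - WgAux.cnt j v) := by
      rw [← pow_add]
      congr 1
      omega
    have h1 : ζ ^ WgAux.cnt j v * 1 = ζ ^ WgAux.cnt j v
        * ζ ^ (WgAux.cnt i v - WgAux.cnt j v) := by
      rw [mul_one]
      nth_rewrite 1 [← heq]
      exact hsplit
    have h2 := mul_left_cancel₀ (pow_ne_zero _ hζne) h1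
    have h3 := WgAux.zeta_pow_eq_one (kk := k)
      (e := WgAux.cnt i v - WgAux.cnt j v) (by omega) h2.symm
    omega

theorem R_cst_zero [IsProbabilityMeasure ν] [ν.IsMulLeftInvariant] (hkN : k ≤ N)
    (i : Fin k → Fin N) :
    Rfun M ν hkN i (fun a => Fin.castLE hkN a) = 0 := by
  classical
  rw [Rfun]
  by_cases hmatch : ∀ v, WgAux.cnt i v = WgAux.cnt (fun a => Fin.castLE hkN a) v
  · obtain ⟨τ, hτ⟩ := WgAux.perm_of_cnt_eq hkN hmatch
    have hslot : Tfun M ν i (fun a => Fin.castLE hkN a) = Wfun M ν hkN τ⁻¹ := by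
      rw [Wfun, hτ]
      have := T_reindex M ν (fun a => Fin.castLE hkN a)
        (fun a => Fin.castLE hkN (τ⁻¹ a)) τ
      rw [← this]
      congr 1
      · funext a
        rw [Equiv.Perm.coe_inv, Equiv.symm_apply_apply]
    have hsum : ∑ σ : Equiv.Perm (Fin k),
        (∏ a : Fin k, if i (σ a) = Fin.castLE hkN a then (1:ℂ) else 0) * Wfun M ν hkN σ
        = Wfun M ν hkN τ⁻¹ := by
      rw [Finset.sum_eq_single τ⁻¹]
      · have h1 : ∏ a : Fin k, (if i (τ⁻¹ a) = Fin.castLE hkN a then (1:ℂ) else 0) = 1 := by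
          refine Finset.prod_eq_one fun a _ => ?_
          rw [if_pos]
          rw [hτ]
          simp only
          rw [Equiv.Perm.coe_inv, Equiv.apply_symm_apply]
        rw [h1, one_mul]
      · intro σ _ hσ
        obtain ⟨a, ha⟩ : ∃ a, σ a ≠ τ⁻¹ a := by
          by_contra hc
          push_neg at hc
          exact hσ (Equiv.ext hc)
        refine mul_eq_zero_of_left (Finset.prod_eq_zero (Finset.mem_univ a) ?_) _
        rw [if_neg]
        rw [hτ]
        simp only
        intro hcontra
        have h2 : τ (σ a) = a := Fin.castLE_injective hkN hcontra
        have h3 : τ⁻¹ (τ (σ a)) = τ⁻¹ a := congrArg (⇑τ⁻¹) h2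
        rw [Equiv.Perm.coe_inv, Equiv.symm_apply_apply] at h3
        exact ha h3
      · intro h
        exact absurd (Finset.mem_univ _) h
    rw [hslot, hsum, sub_self]
  · push_neg at hmatch
    obtain ⟨v, hv⟩ := hmatch
    have hT0 : Tfun M ν i (fun a => Fin.castLE hkN a) = 0 := T_weight M ν _ _ hv
    have hsum0 : ∑ σ : Equiv.Perm (Fin k),
        (∏ a : Fin k, if i (σ a) = Fin.castLE hkN a then (1:ℂ) else 0) * Wfun M ν hkN σ
        = 0 := by
      refine Finset.sum_eq_zero fun σ _ => ?_
      rcases Classical.em (∀ a, i (σ a) = Fin.castLE hkN a) with hall | hnot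
      · exfalso
        apply hv
        have hi : i = fun a => Fin.castLE hkN (σ⁻¹ a) := by
          funext b
          have := hall (σ⁻¹ b)
          rwa [Equiv.Perm.coe_inv, Equiv.apply_symm_apply] at this
        rw [hi]
        exact WgAux.cnt_comp_perm (fun a => Fin.castLE hkN a) σ⁻¹ v
      · push_neg at hnot
        obtain ⟨a, ha⟩ := hnot
        exact mul_eq_zero_of_left (Finset.prod_eq_zero (Finset.mem_univ a)
          (if_neg ha : (if i (σ a) = Fin.castLE hkN a then (1:ℂ) else 0) = 0)) _
    rw [hT0, hsum0, sub_self]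

theorem R_good [IsProbabilityMeasure ν] [ν.IsMulLeftInvariant] (hkN : k ≤ N)
    (i : Fin k → Fin N) :
    WgAux.goodFun hkN (fun j => Rfun M ν hkN i j) := by
  classical
  intro V hV
  have hpart1 : ∑ jj : Fin k → Fin N,
      Tfun M ν i jj * ∏ a, V (jj a) (Fin.castLE hkN a)
      = ∑ p : Fin k → Fin N, (∏ a, V (i a) (p a))
          * Tfun M ν p (fun a => Fin.castLE hkN a) :=
    T_INV M ν ⟨V, hV⟩ i (fun a => Fin.castLE hkN a)
  have hpart2 : ∑ jj : Fin k → Fin N,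
      (∑ σ : Equiv.Perm (Fin k),
        (∏ a, if i (σ a) = jj a then (1:ℂ) else 0) * Wfun M ν hkN σ)
        * ∏ a, V (jj a) (Fin.castLE hkN a)
      = ∑ p : Fin k → Fin N, (∏ a, V (i a) (p a))
          * ∑ σ : Equiv.Perm (Fin k),
            (∏ a, if p (σ a) = Fin.castLE hkN a then (1:ℂ) else 0) * Wfun M ν hkN σ := by
    have hl : ∑ jj : Fin k → Fin N,
        (∑ σ : Equiv.Perm (Fin k),
          (∏ a, if i (σ a) = jj a then (1:ℂ) else 0) * Wfun M ν hkN σ)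
          * ∏ a, V (jj a) (Fin.castLE hkN a)
        = ∑ σ : Equiv.Perm (Fin k),
            (∏ a, V (i (σ a)) (Fin.castLE hkN a)) * Wfun M ν hkN σ := by
      simp_rw [Finset.sum_mul]
      rw [Finset.sum_comm]
      refine Finset.sum_congr rfl fun σ _ => ?_
      calc ∑ jj : Fin k → Fin N,
            ((∏ a, if i (σ a) = jj a then (1:ℂ) else 0) * Wfun M ν hkN σ)
              * ∏ a, V (jj a) (Fin.castLE hkN a)
          = (∑ jj : Fin k → Fin N, (∏ a, if i (σ a) = jj a then (1:ℂ) else 0)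
              * ∏ a, V (jj a) (Fin.castLE hkN a)) * Wfun M ν hkN σ := by
            rw [Finset.sum_mul]
            refine Finset.sum_congr rfl fun jj _ => by ring
        _ = (∏ a, V (i (σ a)) (Fin.castLE hkN a)) * Wfun M ν hkN σ := by
            rw [WgAux.delta_left σ i (fun a => Fin.castLE hkN a) V]
    have hr : ∑ p : Fin k → Fin N, (∏ a, V (i a) (p a))
          * ∑ σ : Equiv.Perm (Fin k),
            (∏ a, if p (σ a) = Fin.castLE hkN a then (1:ℂ) else 0) * Wfun M ν hkN σ
        = ∑ σ : Equiv.Perm (Fin k),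
            (∏ a, V (i (σ a)) (Fin.castLE hkN a)) * Wfun M ν hkN σ := by
      simp_rw [Finset.mul_sum]
      rw [Finset.sum_comm]
      refine Finset.sum_congr rfl fun σ _ => ?_
      calc ∑ p : Fin k → Fin N, (∏ a, V (i a) (p a))
            * ((∏ a, if p (σ a) = Fin.castLE hkN a then (1:ℂ) else 0) * Wfun M ν hkN σ)
          = (∑ p : Fin k → Fin N, (∏ a, V (i a) (p a))
              * (∏ a, if p (σ a) = Fin.castLE hkN a then (1:ℂ) else 0)) * Wfun M ν hkN σ := by
            rw [Finset.sum_mul]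
            refine Finset.sum_congr rfl fun p _ => by ring
        _ = (∏ a, V (i (σ a)) (Fin.castLE hkN a)) * Wfun M ν hkN σ := by
            rw [WgAux.delta_right σ i (fun a => Fin.castLE hkN a) V]
    rw [hl, hr]
  calc ∑ jj : Fin k → Fin N, Rfun M ν hkN i jj * ∏ a, V (jj a) (Fin.castLE hkN a)
      = ∑ jj : Fin k → Fin N,
          (Tfun M ν i jj * ∏ a, V (jj a) (Fin.castLE hkN a)
            - (∑ σ : Equiv.Perm (Fin k),
                (∏ a, if i (σ a) = jj a then (1:ℂ) else 0) * Wfun M ν hkN σ)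
              * ∏ a, V (jj a) (Fin.castLE hkN a)) := by
        refine Finset.sum_congr rfl fun jj _ => ?_
        rw [Rfun, sub_mul]
    _ = (∑ jj : Fin k → Fin N, Tfun M ν i jj * ∏ a, V (jj a) (Fin.castLE hkN a))
          - ∑ jj : Fin k → Fin N,
            (∑ σ : Equiv.Perm (Fin k),
              (∏ a, if i (σ a) = jj a then (1:ℂ) else 0) * Wfun M ν hkN σ)
              * ∏ a, V (jj a) (Fin.castLE hkN a) := Finset.sum_sub_distrib _ _
    _ = ∑ p : Fin k → Fin N, (∏ a, V (i a) (p a))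
          * (Tfun M ν p (fun a => Fin.castLE hkN a)
            - ∑ σ : Equiv.Perm (Fin k),
              (∏ a, if p (σ a) = Fin.castLE hkN a then (1:ℂ) else 0) * Wfun M ν hkN σ) := by
        rw [hpart1, hpart2, ← Finset.sum_sub_distrib]
        refine Finset.sum_congr rfl fun p _ => ?_
        rw [mul_sub]
    _ = 0 := by
        refine Finset.sum_eq_zero fun p _ => ?_
        have hzero := R_cst_zero M ν hkN p
        rw [Rfun] at hzero
        rw [hzero, mul_zero]

end WgP2

/-- **Convolution formula.**  For all `1 ≤ M < N`, `1 ≤ k ≤ N` and all indices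
`i, j : Fin k → Fin N`,
`∫ S_{i₁j₁} ⋯ S_{iₖjₖ} dS = ∑_{σ ∈ S_k} δ_{i_{σ(1)},j_1} ⋯ δ_{i_{σ(k)},j_k} W(σ)`. -/
theorem convolution_formula (M N : ℕ) (hM : 1 ≤ M) (hMN : M < N)
    (ν : Measure (Matrix.unitaryGroup (Fin N) ℂ))
    (hν : ν.IsHaarMeasure) (hνprob : IsProbabilityMeasure ν)
    (k : ℕ) (hk1 : 1 ≤ k) (hkN : k ≤ N) (i j : Fin k → Fin N) :
    (∫ S, ∏ a : Fin k, S (i a) (j a) ∂ (grassMeasure M ν))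
      = ∑ σ : Equiv.Perm (Fin k),
          (∏ a : Fin k, if i (σ a) = j a then (1 : ℂ) else 0) * Wg M ν k σ := by
  classical
  haveI hinv : ν.IsMulLeftInvariant := hν.toIsMulLeftInvariant
  have hR := WgAux.goodFun_zero (WgP2.R_good M ν hkN i) j
  simp only [WgP2.Rfun] at hR
  have hmain := sub_eq_zero.mp hR
  have hTg : (∫ S, ∏ a : Fin k, S (i a) (j a) ∂(grassMeasure M ν)) = WgP2.Tfun M ν i j :=
    WgP2.T_def M ν i j
  rw [hTg, hmain]
  refine Finset.sum_congr rfl fun σ _ => ?_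
  congr 1
  rw [Wg, dif_pos hkN]
  exact (WgP2.T_def M ν _ _).symm
end

section
/- Jucys' product identity: for every integer k ≥ 1, in the group algebra of the symmetric group S_k over the polynomial ring ℂ[x] (equivalently, in the monoid algebra of S_k with coefficients in ℂ[x]), one has (x + J_1)(x + J_2) ⋯ (x + J_k) = ∑_{σ ∈ S_k} x^{c(σ)} · σ, where c(σ) denotes the number of cycles of σ, counting fixed points as cycles. -/
/-- The Jucys–Murphy element `J_i = ∑_{j < i} (j i)` in the group algebra of the
symmetric group `S_k` over `ℂ[x]` (so `J` of the least index is `0`). -/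
noncomputable def JMx (k : ℕ) (i : Fin k) :
    MonoidAlgebra (Polynomial ℂ) (Equiv.Perm (Fin k)) :=
  ∑ j ∈ Finset.univ.filter (fun j : Fin k => j < i),
    MonoidAlgebra.of (Polynomial ℂ) (Equiv.Perm (Fin k)) (Equiv.swap j i)

/-- The number of cycles of `σ ∈ S_k`, counting fixed points as cycles
(so the identity has `k` cycles). -/
def cycleCount {k : ℕ} (σ : Equiv.Perm (Fin k)) : ℕ :=
  σ.cycleType.card + (k - σ.support.card)

open Equiv Equiv.Perm Finset MonoidAlgebra Polynomial

/-- Multiplying `τ` on the left by the transposition `(m, τ m)` (which removes `m` from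
the support) changes `#support - #cycles` by exactly one. -/
lemma key_count {α : Type*} [Fintype α] [DecidableEq α] (τ : Equiv.Perm α) (m : α)
    (h : τ m ≠ m) :
    τ.cycleType.card + (Equiv.swap m (τ m) * τ).support.card + 1
      = (Equiv.swap m (τ m) * τ).cycleType.card + τ.support.card := by
  classical
  set c := τ.cycleOf m with hc_def
  have hc : c ∈ τ.cycleFactorsFinset := cycleOf_mem_cycleFactorsFinset_iff.2 (mem_support.2 h)
  have hcyc : c.IsCycle := isCycle_cycleOf τ h
  set g := τ * c⁻¹ with hg_def
  have hdisj : Equiv.Perm.Disjoint c g :=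
    (disjoint_mul_inv_of_mem_cycleFactorsFinset hc).symm
  have hτ : c * g = τ := by
    rw [hg_def, hdisj.commute.eq, inv_mul_cancel_right]
  have cm : c m = τ m := cycleOf_apply_self τ m
  have ccm : c (c m) = τ (τ m) := by rw [cm]; exact cycleOf_apply_apply_self τ m
  have hgct : g.cycleType = τ.cycleType - c.cycleType :=
    cycleType_mul_inv_mem_cycleFactorsFinset_eq_sub hc
  have hle : c.cycleType ≤ τ.cycleType := cycleType_le_of_mem_cycleFactorsFinset hc
  have hgcard : g.cycleType.card = τ.cycleType.card - c.cycleType.card := by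
    rw [hgct, Multiset.card_sub hle]
  have hccard : c.cycleType.card = 1 := by rw [hcyc.cycleType]; rfl
  have hsupp : τ.support.card = c.support.card + g.support.card := by
    rw [← hτ, hdisj.card_support_mul]
  have hcm_ne : c m ≠ m := by rw [cm]; exact h
  by_cases hff : τ (τ m) = m
  · -- c is the swap
    have hcswap : c = Equiv.swap m (c m) :=
      hcyc.eq_swap_of_apply_apply_eq_self hcm_ne (by rw [ccm]; exact hff)
    have hσ : Equiv.swap m (τ m) * τ = g := by
      rw [← cm, ← hτ, ← hcswap, ← mul_assoc, hcswap, Equiv.swap_mul_self, one_mul]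
    have hcs : c.support.card = 2 := by rw [hcswap]; exact card_support_swap (Ne.symm hcm_ne)
    have hct1 : 1 ≤ τ.cycleType.card := by
      rw [← hccard]; exact Multiset.card_le_card hle
    rw [hσ, hgcard, hccard, hsupp, hcs]
    omega
  · have hccm_ne : c (c m) ≠ m := by rw [ccm]; exact hff
    have hc' : (Equiv.swap m (c m) * c).IsCycle := hcyc.swap_mul hcm_ne hccm_ne
    have hsupp' : (Equiv.swap m (c m) * c).support = c.support \ {m} :=
      support_swap_mul_eq c m hccm_ne
    have hmc : m ∈ c.support := mem_support.2 hcm_ne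
    have hsc' : (Equiv.swap m (c m) * c).support.card = c.support.card - 1 := by
      rw [hsupp', Finset.sdiff_singleton_eq_erase, Finset.card_erase_of_mem hmc]
    have hdisj' : Equiv.Perm.Disjoint (Equiv.swap m (c m) * c) g := by
      rw [disjoint_iff_disjoint_support] at hdisj ⊢
      refine Finset.disjoint_of_subset_left ?_ hdisj
      rw [hsupp']; exact Finset.sdiff_subset
    have hσ : Equiv.swap m (τ m) * τ = (Equiv.swap m (c m) * c) * g := by
      rw [← cm, ← hτ, mul_assoc]
    have hsc1 : 1 ≤ c.support.card := Finset.card_pos.2 ⟨m, hmc⟩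
    have hct1 : 1 ≤ τ.cycleType.card := by
      rw [← hccard]; exact Multiset.card_le_card hle
    rw [hσ, Equiv.Perm.Disjoint.cycleType_mul hdisj', hc'.cycleType]
    simp only [Multiset.card_add, Multiset.coe_card, List.length_singleton, Multiset.card_singleton] at *
    rw [Equiv.Perm.Disjoint.card_support_mul hdisj', hsc', hgcard, hccard, hsupp]
    omega

lemma supp_card_le {k m : ℕ} {σ : Equiv.Perm (Fin k)}
    (hσ : ∀ j : Fin k, m ≤ (j : ℕ) → σ j = j) : σ.support.card ≤ m := by
  classical
  calc σ.support.card ≤ (Finset.range m).card := by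
        refine Finset.card_le_card_of_injOn Fin.val (fun j hj => ?_)
          (fun a _ b _ h => Fin.val_injective h)
        refine Finset.mem_range.2 ?_
        by_contra hh
        exact (Equiv.Perm.mem_support.1 hj) (hσ j (le_of_not_gt hh))
    _ = m := Finset.card_range m

lemma jucys_aux (k : ℕ) (m : ℕ) (hm : m ≤ k) :
    (((List.finRange k).map fun i =>
        MonoidAlgebra.single (1 : Equiv.Perm (Fin k)) (Polynomial.X : Polynomial ℂ)
          + JMx k i).take m).prod
      = ∑ σ ∈ Finset.univ.filter
            (fun σ : Equiv.Perm (Fin k) => ∀ j : Fin k, m ≤ (j : ℕ) → σ j = j),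
          MonoidAlgebra.single σ
            ((Polynomial.X : Polynomial ℂ) ^ (σ.cycleType.card + (m - σ.support.card))) := by
  classical
  induction m with
  | zero =>
    have hset : Finset.univ.filter
        (fun σ : Equiv.Perm (Fin k) => ∀ j : Fin k, 0 ≤ (j : ℕ) → σ j = j) = {1} := by
      ext σ
      simp only [Finset.mem_filter, Finset.mem_univ, true_and, Finset.mem_singleton]
      constructor
      · intro hσ; exact Equiv.ext fun x => hσ x (Nat.zero_le _)
      · intro hσ j _; rw [hσ]; rfl
    rw [hset, Finset.sum_singleton]
    simp [MonoidAlgebra.one_def]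
  | succ m ih =>
    have hmk : m < k := hm
    have hm' : m ≤ k := le_of_lt hmk
    set i : Fin k := ⟨m, hmk⟩ with hi_def
    have him : (i : ℕ) = m := rfl
    have hlen : m < (((List.finRange k).map fun i =>
        MonoidAlgebra.single (1 : Equiv.Perm (Fin k)) (Polynomial.X : Polynomial ℂ)
          + JMx k i)).length := by
      simpa using hmk
    rw [List.prod_take_succ _ m hlen, ih hm']
    have hget : getElem (((List.finRange k).map fun i =>
        MonoidAlgebra.single (1 : Equiv.Perm (Fin k)) (Polynomial.X : Polynomial ℂ)
          + JMx k i)) m hlen =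
        MonoidAlgebra.single (1 : Equiv.Perm (Fin k)) (Polynomial.X : Polynomial ℂ)
          + JMx k i := by
      simp [hi_def]
    rw [hget]
    -- abbreviations
    set Sm := Finset.univ.filter
      (fun σ : Equiv.Perm (Fin k) => ∀ j : Fin k, m ≤ (j : ℕ) → σ j = j) with hSm
    set Sm1 := Finset.univ.filter
      (fun σ : Equiv.Perm (Fin k) => ∀ j : Fin k, m + 1 ≤ (j : ℕ) → σ j = j) with hSm1
    rw [mul_add]
    rw [← Finset.sum_filter_add_sum_filter_not Sm1 (fun τ => τ i = i)]
    congr 1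
    · -- fixed part
      have hset : Sm1.filter (fun τ => τ i = i) = Sm := by
        ext τ
        simp only [hSm, hSm1, Finset.mem_filter, Finset.mem_univ, true_and]
        constructor
        · rintro ⟨h1, h2⟩ j hj
          rcases eq_or_lt_of_le hj with hj' | hj'
          · have : j = i := Fin.ext hj'.symm
            rw [this]; exact h2
          · exact h1 j hj'
        · intro h1
          exact ⟨fun j hj => h1 j (le_of_lt hj), h1 i le_rfl⟩
      rw [hset, Finset.sum_mul]
      refine Finset.sum_congr rfl fun σ hσ => ?_
      rw [MonoidAlgebra.single_mul_single, mul_one]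
      congr 1
      · have hσ' : ∀ j : Fin k, m ≤ (j : ℕ) → σ j = j := by
          simpa [hSm] using hσ
        have hcard : σ.support.card ≤ m := supp_card_le hσ'
        rw [← pow_succ]
        congr 1
        omega
    · -- moving part
      rw [Finset.sum_mul]
      have expand : ∀ σ ∈ Sm, (MonoidAlgebra.single σ
            ((Polynomial.X : Polynomial ℂ) ^ (σ.cycleType.card + (m - σ.support.card))))
              * JMx k i
          = ∑ j ∈ Finset.univ.filter (fun j : Fin k => j < i),
              MonoidAlgebra.single (σ * Equiv.swap j i)
                ((Polynomial.X : Polynomial ℂ) ^ (σ.cycleType.card + (m - σ.support.card))) := by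
        intro σ _
        rw [JMx, Finset.mul_sum]
        refine Finset.sum_congr rfl fun j _ => ?_
        rw [MonoidAlgebra.of_apply, MonoidAlgebra.single_mul_single, mul_one]
      rw [Finset.sum_congr rfl expand, ← Finset.sum_product']
      refine Finset.sum_nbij' (fun p => p.1 * Equiv.swap p.2 i)
        (fun τ => (τ * Equiv.swap (τ⁻¹ i) i, τ⁻¹ i)) ?_ ?_ ?_ ?_ ?_
      · rintro ⟨σ, j⟩ hp
        simp only [Finset.mem_product, hSm, Finset.mem_filter, Finset.mem_univ, true_and] at hp
        obtain ⟨h1, h2⟩ := hp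
        have hji : j ≠ i := ne_of_lt h2
        have hii : σ i = i := h1 i le_rfl
        simp only [hSm1, Finset.mem_filter, Finset.mem_univ, true_and]
        constructor
        · intro j' hj'
          have hj'i : j' ≠ i := by
            intro e; rw [e, him] at hj'; omega
          have hj'j : j' ≠ j := by
            intro e
            have hlt : (j : ℕ) < (i : ℕ) := h2
            rw [← e] at hlt; omega
          rw [Equiv.Perm.mul_apply, Equiv.swap_apply_of_ne_of_ne hj'j hj'i]
          exact h1 j' (by omega)
        · intro e
          rw [Equiv.Perm.mul_apply, Equiv.swap_apply_right] at e
          have : j = i := σ.injective (by rw [e, hii])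
          exact hji this
      · intro τ hτ
        simp only [hSm1, Finset.mem_filter, Finset.mem_univ, true_and] at hτ
        obtain ⟨h1, h2⟩ := hτ
        have hji : τ⁻¹ i ≠ i := fun e => h2 (by conv_lhs => rw [← e, Equiv.Perm.coe_inv, Equiv.apply_symm_apply])
        have hjlt : τ⁻¹ i < i := by
          by_contra hh
          have hge : m ≤ ((τ⁻¹ i : Fin k) : ℕ) := him ▸ Fin.le_iff_val_le_val.1 (le_of_not_gt hh)
          have hne : ((τ⁻¹ i : Fin k) : ℕ) ≠ m := fun e => hji (Fin.ext e)
          have := h1 (τ⁻¹ i) (by omega)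
          rw [Equiv.Perm.coe_inv, Equiv.apply_symm_apply] at this
          exact hji this.symm
        simp only [Finset.mem_product, hSm, Finset.mem_filter, Finset.mem_univ, true_and]
        refine ⟨fun j' hj' => ?_, hjlt⟩
        by_cases hj'i : j' = i
        · rw [hj'i, Equiv.Perm.mul_apply, Equiv.swap_apply_right, Equiv.Perm.coe_inv, Equiv.apply_symm_apply]
        · have hj'j : j' ≠ τ⁻¹ i := by
            intro e
            have hlt : ((τ⁻¹ i : Fin k) : ℕ) < (i : ℕ) := hjlt
            rw [← e] at hlt; omega
          rw [Equiv.Perm.mul_apply, Equiv.swap_apply_of_ne_of_ne hj'j hj'i]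
          have hne : (j' : ℕ) ≠ m := fun e => hj'i (Fin.ext (by rw [e, him]))
          exact h1 j' (by omega)
      · rintro ⟨σ, j⟩ hp
        simp only [Finset.mem_product, hSm, Finset.mem_filter, Finset.mem_univ, true_and] at hp
        obtain ⟨h1, h2⟩ := hp
        have hii : σ i = i := h1 i le_rfl
        have hinv : (σ * Equiv.swap j i)⁻¹ i = j := by
          rw [mul_inv_rev, Equiv.Perm.mul_apply, Equiv.swap_inv]
          have : σ⁻¹ i = i := by
            apply σ.injective
            rw [Equiv.Perm.coe_inv, Equiv.apply_symm_apply, hii]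
          rw [this, Equiv.swap_apply_right]
        ext : 1
        · simp only [hinv, mul_assoc, Equiv.swap_mul_self, mul_one]
        · simp only [hinv]
      · intro τ hτ
        simp only [mul_assoc, Equiv.swap_mul_self, mul_one]
      · rintro ⟨σ, j⟩ hp
        dsimp only
        simp only [Finset.mem_product, hSm, Finset.mem_filter, Finset.mem_univ, true_and] at hp
        obtain ⟨h1, h2⟩ := hp
        have hji : j ≠ i := ne_of_lt h2
        have hii : σ i = i := h1 i le_rfl
        set τ := σ * Equiv.swap j i with hτdef
        have hτi : τ i = σ j := by rw [hτdef, Equiv.Perm.mul_apply, Equiv.swap_apply_right]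
        have hσji : σ j ≠ i := by
          intro e
          exact hji (σ.injective (by rw [e, hii]))
        have hτine : τ i ≠ i := by rw [hτi]; exact hσji
        have hback : Equiv.swap i (τ i) * τ = σ := by
          rw [hτi, hτdef, Equiv.mul_swap_eq_swap_mul, hii, ← mul_assoc,
            Equiv.swap_comm i (σ j), Equiv.swap_mul_self, one_mul]
        have hkey := key_count τ i hτine
        rw [hback] at hkey
        congr 1
        have hsm : σ.support.card ≤ m := supp_card_le h1
        have hsm1 : τ.support.card ≤ m + 1 := by
          refine supp_card_le (fun j' hj' => ?_)
          have hj'i : j' ≠ i := by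
            intro e; rw [e, him] at hj'; omega
          have hj'j : j' ≠ j := by
            intro e
            have hlt : (j : ℕ) < (i : ℕ) := h2
            rw [← e] at hlt; omega
          rw [hτdef, Equiv.Perm.mul_apply, Equiv.swap_apply_of_ne_of_ne hj'j hj'i]
          exact h1 j' (by omega)
        congr 1
        omega

/-- **Jucys' product identity**: in the group algebra of `S_k` over `ℂ[x]`,
`(x + J_1)(x + J_2) ⋯ (x + J_k) = ∑_{σ ∈ S_k} x^{c(σ)} σ`, where `c(σ)` is the
number of cycles of `σ` including fixed points. -/
theorem jucys_product_identity (k : ℕ) (hk : 1 ≤ k) :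
    ((List.finRange k).map fun i =>
        MonoidAlgebra.single (1 : Equiv.Perm (Fin k)) (Polynomial.X : Polynomial ℂ)
          + JMx k i).prod
      = ∑ σ : Equiv.Perm (Fin k),
          MonoidAlgebra.single σ ((Polynomial.X : Polynomial ℂ) ^ cycleCount σ) := by
  classical
  have h := jucys_aux k k le_rfl
  rw [List.take_of_length_le (by simp)] at h
  rw [h]
  have hset : Finset.univ.filter
      (fun σ : Equiv.Perm (Fin k) => ∀ j : Fin k, k ≤ (j : ℕ) → σ j = j) = Finset.univ := by
    ext σ
    simp only [Finset.mem_filter, Finset.mem_univ, true_and, iff_true]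
    intro j hj
    exact absurd j.isLt (not_lt.2 hj)
  rw [hset]
  rfl
end

section
/- Interlacing lemma: let f_1, f_2, f_3, … be a sequence of real polynomials with nonnegative coefficients such that deg f_i = i for every i ≥ 1. Suppose f_1 strictly interlaces f_2, and suppose that for every d ≥ 2 there exist a real polynomial ℓ_d of degree at most 1 and a real polynomial q_d of degree 2 satisfying q_d(t) > 0 for all t ≤ 0, such that f_{d+1} = ℓ_d · f_d − q_d · f_{d−1}. Then every f_i is real-rooted and f_i strictly interlaces f_{i+1} for every i ≥ 1. -/
/-- A real polynomial is real-rooted if all of its complex roots are real. -/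
def RealRooted (P : Polynomial ℝ) : Prop :=
  ∀ z : ℂ, (P.map (algebraMap ℝ ℂ)).IsRoot z → z.im = 0

/-- The real roots of `P`, with multiplicity, listed in increasing order. -/
noncomputable def rootList (P : Polynomial ℝ) : List ℝ :=
  P.roots.sort (· ≤ ·)

/-- `P` interlaces `Q`: both are real-rooted (all `natDegree` many roots are real),
`deg Q = deg P + 1`, and writing the roots of `P` as `a_1 ≤ ⋯ ≤ a_n` and those of
`Q` as `b_1 ≤ ⋯ ≤ b_{n+1}`, one has `b_1 ≤ a_1 ≤ b_2 ≤ a_2 ≤ ⋯ ≤ a_n ≤ b_{n+1}`. -/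
def Interlaces (P Q : Polynomial ℝ) : Prop :=
  P ≠ 0 ∧ Q ≠ 0 ∧ Q.natDegree = P.natDegree + 1 ∧
  P.roots.card = P.natDegree ∧ Q.roots.card = Q.natDegree ∧
  ∀ i < P.natDegree,
    (rootList Q).getD i 0 ≤ (rootList P).getD i 0 ∧
    (rootList P).getD i 0 ≤ (rootList Q).getD (i + 1) 0

/-- `P` strictly interlaces `Q`: as in `Interlaces`, with all inequalities strict. -/
def StrictlyInterlaces (P Q : Polynomial ℝ) : Prop :=
  P ≠ 0 ∧ Q ≠ 0 ∧ Q.natDegree = P.natDegree + 1 ∧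
  P.roots.card = P.natDegree ∧ Q.roots.card = Q.natDegree ∧
  ∀ i < P.natDegree,
    (rootList Q).getD i 0 < (rootList P).getD i 0 ∧
    (rootList P).getD i 0 < (rootList Q).getD (i + 1) 0


open Polynomial

lemma rl_length (P : Polynomial ℝ) : (rootList P).length = Multiset.card P.roots :=
  Multiset.length_sort _

lemma rl_mem (P : Polynomial ℝ) {i : ℕ} (hi : i < (rootList P).length) :
    (rootList P).getD i 0 ∈ P.roots := by
  rw [List.getD_eq_getElem _ _ hi]
  exact Multiset.mem_sort _ |>.1 (List.getElem_mem hi)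

lemma rl_mono (P : Polynomial ℝ) {i j : ℕ} (hij : i ≤ j) (hj : j < (rootList P).length) :
    (rootList P).getD i 0 ≤ (rootList P).getD j 0 := by
  have hi : i < (rootList P).length := lt_of_le_of_lt hij hj
  rw [List.getD_eq_getElem _ _ hi, List.getD_eq_getElem _ _ hj]
  exact List.Pairwise.rel_get_of_le (Multiset.pairwise_sort _ _) (by exact hij)

lemma lc_pos_of_nonneg (P : Polynomial ℝ) (hP : P ≠ 0) (h : ∀ j, 0 ≤ P.coeff j) :
    0 < P.leadingCoeff :=
  lt_of_le_of_ne (h _) (Ne.symm (leadingCoeff_ne_zero.2 hP))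

lemma eval_pos_of_nonneg (P : Polynomial ℝ) (hP : P ≠ 0) (h : ∀ j, 0 ≤ P.coeff j)
    {x : ℝ} (hx : 0 < x) : 0 < P.eval x := by
  rw [eval_eq_sum_range]
  refine Finset.sum_pos' (fun i _ => mul_nonneg (h i) (pow_nonneg hx.le i)) ?_
  refine ⟨P.natDegree, Finset.self_mem_range_succ _, ?_⟩
  exact mul_pos (lc_pos_of_nonneg P hP h) (pow_pos hx _)

lemma roots_nonpos (P : Polynomial ℝ) (hP : P ≠ 0) (h : ∀ j, 0 ≤ P.coeff j) :
    ∀ x ∈ P.roots, x ≤ 0 := by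
  intro x hx
  by_contra hc
  push_neg at hc
  have := eval_pos_of_nonneg P hP h hc
  rw [(mem_roots hP).1 hx] at this
  exact lt_irrefl _ this

lemma realRooted_of_card {P : Polynomial ℝ} (hP : P ≠ 0)
    (hc : Multiset.card P.roots = P.natDegree) : RealRooted P := by
  intro z hz
  have hinj : Function.Injective (algebraMap ℝ ℂ) := (algebraMap ℝ ℂ).injective
  have hmap : P.map (algebraMap ℝ ℂ) ≠ 0 := (Polynomial.map_ne_zero_iff hinj).2 hP
  have h1 : P.roots.map (algebraMap ℝ ℂ) ≤ (P.map (algebraMap ℝ ℂ)).roots :=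
    map_roots_le hmap
  have hcard : Multiset.card ((P.map (algebraMap ℝ ℂ)).roots) = P.natDegree := by
    rw [← Polynomial.natDegree_map (algebraMap ℝ ℂ) (p := P)]
    exact splits_iff_card_roots.1 (IsAlgClosed.splits _)
  have heq : P.roots.map (algebraMap ℝ ℂ) = (P.map (algebraMap ℝ ℂ)).roots := by
    apply Multiset.eq_of_le_of_card_le h1
    rw [hcard, Multiset.card_map, hc]
  have hzmem : z ∈ (P.map (algebraMap ℝ ℂ)).roots := (mem_roots hmap).2 hz
  rw [← heq, Multiset.mem_map] at hzmem
  obtain ⟨r, _, rfl⟩ := hzmem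
  rfl

lemma list_prod_getD (L : List ℝ) (g : ℝ → ℝ) :
    (L.map g).prod = ∏ i ∈ Finset.range L.length, g (L.getD i 0) := by
  induction L with
  | nil => simp
  | cons a t ih =>
      simp [Finset.prod_range_succ', ih, List.getD_cons_succ, List.getD_cons_zero, mul_comm]

lemma eval_eq_prod (P : Polynomial ℝ) (hc : Multiset.card P.roots = P.natDegree) (x : ℝ) :
    P.eval x = P.leadingCoeff *
      ∏ i ∈ Finset.range P.natDegree, (x - (rootList P).getD i 0) := by
  conv_lhs => rw [← C_leadingCoeff_mul_prod_multiset_X_sub_C hc]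
  rw [eval_mul, eval_C, eval_multiset_prod]
  congr 1
  have hroots : P.roots = ↑(rootList P) := (Multiset.sort_eq _ _).symm
  rw [hroots, Multiset.map_coe, Multiset.map_coe, Multiset.prod_coe]
  have hlen : (rootList P).length = P.natDegree := by rw [rl_length, hc]
  rw [← hlen, List.map_map, list_prod_getD]
  simp

lemma sign_eval (P : Polynomial ℝ) (hc : Multiset.card P.roots = P.natDegree)
    (hlc : 0 < P.leadingCoeff) {x : ℝ} {j : ℕ} (hj : j ≤ P.natDegree)
    (hlt : ∀ i, i < j → (rootList P).getD i 0 < x)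
    (hgt : ∀ i, j ≤ i → i < P.natDegree → x < (rootList P).getD i 0) :
    0 < (-1) ^ (P.natDegree - j) * P.eval x := by
  rw [eval_eq_prod P hc]
  have hsplit : ∏ i ∈ Finset.range P.natDegree, (x - (rootList P).getD i 0)
      = (∏ i ∈ Finset.Ico 0 j, (x - (rootList P).getD i 0)) *
        ∏ i ∈ Finset.Ico j P.natDegree, (x - (rootList P).getD i 0) := by
    rw [Finset.prod_Ico_consecutive _ (Nat.zero_le j) hj, ← Finset.range_eq_Ico]
  have h2 : ∏ i ∈ Finset.Ico j P.natDegree, (x - (rootList P).getD i 0)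
      = (-1) ^ (P.natDegree - j) *
        ∏ i ∈ Finset.Ico j P.natDegree, ((rootList P).getD i 0 - x) := by
    rw [← Nat.card_Ico j P.natDegree, ← Finset.prod_const, ← Finset.prod_mul_distrib]
    exact Finset.prod_congr rfl fun i _ => by ring
  have hpos1 : 0 < ∏ i ∈ Finset.Ico 0 j, (x - (rootList P).getD i 0) :=
    Finset.prod_pos fun i hi => sub_pos.2 (hlt i (Finset.mem_Ico.1 hi).2)
  have hpos2 : 0 < ∏ i ∈ Finset.Ico j P.natDegree, ((rootList P).getD i 0 - x) :=
    Finset.prod_pos fun i hi =>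
      sub_pos.2 (hgt i (Finset.mem_Ico.1 hi).1 (Finset.mem_Ico.1 hi).2)
  have hsq : ((-1 : ℝ) ^ (P.natDegree - j)) * ((-1) ^ (P.natDegree - j)) = 1 := by
    rw [← pow_add]
    exact Even.neg_one_pow ⟨_, rfl⟩
  calc (0:ℝ) < P.leadingCoeff * ((∏ i ∈ Finset.Ico 0 j, (x - (rootList P).getD i 0)) *
        ∏ i ∈ Finset.Ico j P.natDegree, ((rootList P).getD i 0 - x)) :=
        mul_pos hlc (mul_pos hpos1 hpos2)
    _ = (-1) ^ (P.natDegree - j) * (P.leadingCoeff *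
          ∏ i ∈ Finset.range P.natDegree, (x - (rootList P).getD i 0)) := by
        rw [hsplit, h2]
        linear_combination (-(P.leadingCoeff * ((∏ i ∈ Finset.Ico 0 j, (x - (rootList P).getD i 0)) * ∏ i ∈ Finset.Ico j P.natDegree, ((rootList P).getD i 0 - x)))) * hsq

lemma opp_sign {A B : ℝ} (k : ℕ) (hA : 0 < (-1) ^ k * A) (hB : 0 < (-1) ^ (k + 1) * B) :
    A * B < 0 := by
  have h := mul_pos hA hB
  have hsq : ((-1 : ℝ) ^ k) * ((-1) ^ k) = 1 := by
    rw [← pow_add]; exact Even.neg_one_pow ⟨_, rfl⟩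
  have he : (-1 : ℝ) ^ k * A * ((-1) ^ (k + 1) * B) = ((-1) ^ k * (-1) ^ k) * (-(A * B)) := by
    rw [pow_succ]; ring
  rw [he, hsq, one_mul] at h
  linarith

lemma poly_root_between (R : Polynomial ℝ) {a b : ℝ} (hab : a < b)
    (h : R.eval a * R.eval b < 0) : ∃ c, a < c ∧ c < b ∧ R.eval c = 0 := by
  rcases mul_neg_iff.1 h with ⟨ha, hb⟩ | ⟨ha, hb⟩
  · have hsub := intermediate_value_Ioo' hab.le (f := fun x => R.eval x) R.continuousOn
    have h0 : (0:ℝ) ∈ Set.Ioo (R.eval b) (R.eval a) := ⟨hb, ha⟩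
    obtain ⟨c, hc, hc0⟩ := hsub h0
    exact ⟨c, hc.1, hc.2, hc0⟩
  · have hsub := intermediate_value_Ioo hab.le (f := fun x => R.eval x) R.continuousOn
    have : (0:ℝ) ∈ Set.Ioo (R.eval a) (R.eval b) := ⟨ha, hb⟩
    obtain ⟨c, hc, hc0⟩ := hsub this
    exact ⟨c, hc.1, hc.2, hc0⟩

lemma exists_neg_sign (R : Polynomial ℝ) (hlc : 0 < R.leadingCoeff)
    (hd : 0 < R.natDegree) (b : ℝ) :
    ∃ x < b, 0 < (-1) ^ R.natDegree * R.eval x := by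
  set n := R.natDegree with hn
  set Q := C ((-1 : ℝ) ^ n) * (R.comp (-X)) with hQdef
  have hc0 : ((-1 : ℝ) ^ n) ≠ 0 := pow_ne_zero _ (by norm_num)
  have hXdeg : (-X : Polynomial ℝ).natDegree = 1 := by simp
  have hcompdeg : (R.comp (-X)).natDegree = n := by rw [natDegree_comp, hXdeg, mul_one]
  have hsq : ((-1 : ℝ) ^ n) * ((-1) ^ n) = 1 := by
    rw [← pow_add]; exact Even.neg_one_pow ⟨_, rfl⟩
  have hdQ : 0 < Q.degree := by
    rw [← natDegree_pos_iff_degree_pos, hQdef, natDegree_C_mul hc0, hcompdeg]; exact hd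
  have hlcQ : Q.leadingCoeff = R.leadingCoeff := by
    rw [hQdef, leadingCoeff_mul, leadingCoeff_C,
      leadingCoeff_comp (by rw [hXdeg]; norm_num)]
    have h1 : (-X : Polynomial ℝ).leadingCoeff = -1 := by simp
    rw [h1, ← hn]
    linear_combination R.leadingCoeff * hsq
  have htend : Filter.Tendsto (fun x => Q.eval x) Filter.atTop Filter.atTop :=
    Q.tendsto_atTop_of_leadingCoeff_nonneg hdQ (by rw [hlcQ]; exact hlc.le)
  have h1 : ∀ᶠ y in Filter.atTop, 0 < Q.eval y := htend.eventually_gt_atTop 0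
  have h2 : ∀ᶠ y in Filter.atTop, -b < y := Filter.eventually_gt_atTop (-b)
  obtain ⟨y, hy1, hy2⟩ := (h1.and h2).exists
  refine ⟨-y, by linarith, ?_⟩
  have heq : Q.eval y = (-1) ^ n * R.eval (-y) := by
    rw [hQdef, eval_mul, eval_C, eval_comp, eval_neg, eval_X]
  exact heq ▸ hy1


lemma step (P Q R ℓ q : Polynomial ℝ)
    (hPQ : StrictlyInterlaces P Q)
    (hlcP : 0 < P.leadingCoeff)
    (hQnonpos : ∀ x ∈ Q.roots, x ≤ 0)
    (hq : ∀ x : ℝ, x ≤ 0 → 0 < q.eval x)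
    (hR : R = ℓ * Q - q * P)
    (hdR : R.natDegree = Q.natDegree + 1)
    (hRcoeff : ∀ j, 0 ≤ R.coeff j) :
    StrictlyInterlaces Q R := by
  obtain ⟨hP0, hQ0, hdQ, hcP, hcQ, hint⟩ := hPQ
  set n := P.natDegree with hn
  -- basic facts
  have hR0 : R ≠ 0 := by
    intro h0
    rw [h0, natDegree_zero] at hdR
    omega
  have hlcR : 0 < R.leadingCoeff := lc_pos_of_nonneg R hR0 hRcoeff
  have hlenQ : (rootList Q).length = n + 1 := by rw [rl_length, hcQ, hdQ]
  have hlenP : (rootList P).length = n := by rw [rl_length, hcP]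
  have hQmem : ∀ j ≤ n, (rootList Q).getD j 0 ∈ Q.roots := fun j hj =>
    rl_mem Q (by omega)
  have hQle : ∀ j ≤ n, (rootList Q).getD j 0 ≤ 0 := fun j hj =>
    hQnonpos _ (hQmem j hj)
  have hQroot : ∀ j ≤ n, Q.eval ((rootList Q).getD j 0) = 0 := fun j hj =>
    (mem_roots hQ0).1 (hQmem j hj)
  have hQmono : ∀ i j, i ≤ j → j ≤ n →
      (rootList Q).getD i 0 ≤ (rootList Q).getD j 0 := fun i j hij hj =>
    rl_mono Q hij (by omega)
  -- sign of P at the roots of Q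
  have signP : ∀ j ≤ n, 0 < (-1) ^ (n - j) * P.eval ((rootList Q).getD j 0) := by
    intro j hj
    refine sign_eval P hcP hlcP (by omega) (fun i hi => ?_) (fun i hji hi => ?_)
    · calc (rootList P).getD i 0 < (rootList Q).getD (i + 1) 0 :=
            (hint i (by omega)).2
        _ ≤ (rootList Q).getD j 0 := hQmono _ _ (by omega) hj
    · calc (rootList Q).getD j 0 ≤ (rootList Q).getD i 0 := hQmono _ _ hji (by omega)
        _ < (rootList P).getD i 0 := (hint i hi).1
  -- sign of R at the roots of Q
  have signR : ∀ j ≤ n, 0 < (-1) ^ (n - j + 1) * R.eval ((rootList Q).getD j 0) := by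
    intro j hj
    have hevalR : R.eval ((rootList Q).getD j 0)
        = -(q.eval ((rootList Q).getD j 0) * P.eval ((rootList Q).getD j 0)) := by
      rw [hR, eval_sub, eval_mul, eval_mul, hQroot j hj, mul_zero, zero_sub]
    rw [hevalR, pow_succ]
    have hqpos := hq _ (hQle j hj)
    have := signP j hj
    nlinarith
  -- the top evaluation point
  set T : ℝ := max ((rootList Q).getD n 0) 0 + 1 with hT
  have hTpos : 0 < T := by
    have h2 : (0:ℝ) ≤ max ((rootList Q).getD n 0) 0 := le_max_right _ _
    rw [hT]; linarith
  have hTgt : (rootList Q).getD n 0 < T := by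
    have h2 : (rootList Q).getD n 0 ≤ max ((rootList Q).getD n 0) 0 := le_max_left _ _
    rw [hT]; linarith
  have hRT : 0 < R.eval T := eval_pos_of_nonneg R hR0 hRcoeff hTpos
  have hdRn : R.natDegree = n + 2 := by omega
  -- existence of roots of R
  have key : ∀ j : ℕ, ∃ y, R.eval y = 0 ∧
      (∀ i, i < j → i ≤ n → (rootList Q).getD i 0 < y) ∧
      (∀ i, j ≤ i → i ≤ n → y < (rootList Q).getD i 0) := by
    intro j
    match j with
    | 0 =>
      obtain ⟨x₀, hx₀b, hx₀⟩ := exists_neg_sign R hlcR (by omega) ((rootList Q).getD 0 0)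
      rw [hdRn] at hx₀
      have hsgn0 : 0 < (-1) ^ (n + 1) * R.eval ((rootList Q).getD 0 0) := by
        have := signR 0 (Nat.zero_le n); simpa using this
      have hx₀' : 0 < (-1) ^ n * R.eval x₀ := by
        have hpe : ((-1:ℝ)) ^ (n + 2) = (-1) ^ n := by
          rw [pow_succ, pow_succ]; ring
        rw [hpe] at hx₀; exact hx₀
      have hmul : R.eval x₀ * R.eval ((rootList Q).getD 0 0) < 0 :=
        opp_sign n hx₀' hsgn0
      obtain ⟨c, hc1, hc2, hc0⟩ := poly_root_between R hx₀b hmul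
      exact ⟨c, hc0, fun i hi _ => absurd hi (Nat.not_lt_zero i),
        fun i _ hi => lt_of_lt_of_le hc2 (hQmono 0 i (Nat.zero_le i) hi)⟩
    | (k + 1) =>
      by_cases hk : k < n
      · -- root between rQ k and rQ (k+1)
        have hlt : (rootList Q).getD k 0 < (rootList Q).getD (k + 1) 0 :=
          lt_trans (hint k hk).1 (hint k hk).2
        have hs1 := signR k (by omega)
        have hs2 := signR (k + 1) (by omega)
        have hpe : n - (k + 1) + 1 = n - k := by omega
        rw [hpe] at hs2
        have hmul : R.eval ((rootList Q).getD k 0) * R.eval ((rootList Q).getD (k+1) 0) < 0 := by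
          have := opp_sign (n - k) hs2 hs1
          linarith [mul_comm (R.eval ((rootList Q).getD k 0)) (R.eval ((rootList Q).getD (k+1) 0))]
        obtain ⟨c, hc1, hc2, hc0⟩ := poly_root_between R hlt hmul
        refine ⟨c, hc0, fun i hi hi' => lt_of_le_of_lt (hQmono i k (by omega) (by omega)) hc1,
          fun i hi hi' => lt_of_lt_of_le hc2 (hQmono (k+1) i hi hi')⟩
      · -- root between rQ n and T
        have hs := signR n le_rfl
        have : 0 < (-1 : ℝ) ^ 1 * R.eval ((rootList Q).getD n 0) := by
          have hpe : n - n + 1 = 1 := by omega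
          rw [hpe] at hs; exact hs
        have hRn : R.eval ((rootList Q).getD n 0) < 0 := by
          simpa using this
        have hmul : R.eval ((rootList Q).getD n 0) * R.eval T < 0 :=
          mul_neg_of_neg_of_pos hRn hRT
        obtain ⟨c, hc1, hc2, hc0⟩ := poly_root_between R hTgt hmul
        refine ⟨c, hc0, fun i hi hi' => lt_of_le_of_lt (hQmono i n hi' le_rfl) hc1,
          fun i hi hi' => absurd (le_trans hi hi') (by omega)⟩
  set c : ℕ → ℝ := fun j => (key j).choose with hc
  have hcroot : ∀ j, R.eval (c j) = 0 := fun j => (key j).choose_spec.1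
  have hclow : ∀ j i, i < j → i ≤ n → (rootList Q).getD i 0 < c j :=
    fun j => (key j).choose_spec.2.1
  have hchigh : ∀ j i, j ≤ i → i ≤ n → c j < (rootList Q).getD i 0 :=
    fun j => (key j).choose_spec.2.2
  have hcmono : ∀ i j, i < j → i ≤ n → c i < c j := fun i j hij hi =>
    lt_trans (hchigh i i le_rfl hi) (hclow j i hij hi)
  -- the list of roots of R
  set L : List ℝ := List.ofFn (fun k : Fin (n + 2) => c k) with hL
  have hLlen : L.length = n + 2 := by rw [hL, List.length_ofFn]
  have hLget : ∀ (i : ℕ) (h : i < L.length), L[i] = c i := by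
    intro i h
    simp only [hL, List.getElem_ofFn]
  have hLpair : L.Pairwise (· < ·) := by
    rw [hL, List.pairwise_ofFn]
    intro i j hij
    exact hcmono i j hij (by omega)
  have hLnodup : L.Nodup := hLpair.imp ne_of_lt
  have hLsub : (L : Multiset ℝ) ≤ R.roots := by
    rw [Multiset.le_iff_count]
    intro a
    by_cases ha : a ∈ L
    · classical
      rw [Multiset.coe_count, List.count_eq_one_of_mem hLnodup ha, count_roots]
      refine (rootMultiplicity_pos hR0).2 ?_
      have ha' : a ∈ Set.range (fun k : Fin (n + 2) => c k) :=
        (List.mem_ofFn' _ _).1 (hL ▸ ha)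
      obtain ⟨i, rfl⟩ := ha'
      exact hcroot i
    · rw [Multiset.coe_count, List.count_eq_zero_of_not_mem ha]
      omega
  have hRroots : R.roots = (L : Multiset ℝ) := by
    refine (Multiset.eq_of_le_of_card_le hLsub ?_).symm
    calc Multiset.card R.roots ≤ R.natDegree := card_roots' R
      _ = (L : Multiset ℝ).card := by rw [Multiset.coe_card, hLlen, hdRn]
  have hcR : R.roots.card = R.natDegree := by
    rw [hRroots, Multiset.coe_card, hLlen, hdRn]
  have hrlR : rootList R = L := by
    have h1 : (↑(rootList R) : Multiset ℝ) = (↑L : Multiset ℝ) := by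
      rw [rootList, Multiset.sort_eq, hRroots]
    have hperm : List.Perm (rootList R) L := Multiset.coe_eq_coe.1 h1
    refine List.Perm.eq_of_pairwise' (Multiset.pairwise_sort _ _) ?_ hperm
    exact List.Pairwise.imp le_of_lt hLpair
  have hrlRget : ∀ i ≤ n + 1, (rootList R).getD i 0 = c i := by
    intro i hi
    rw [hrlR, List.getD_eq_getElem _ _ (by omega), hLget]
  refine ⟨hQ0, hR0, by omega, by rw [hcQ], hcR, ?_⟩
  intro i hi
  rw [hdQ] at hi
  rw [hrlRget i (by omega), hrlRget (i+1) (by omega)]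
  exact ⟨hchigh i i le_rfl (by omega), hclow (i+1) i (lt_add_one i) (by omega)⟩


/-- **Interlacing lemma.**  If `f 1, f 2, …` is a sequence of real polynomials with
nonnegative coefficients and `deg (f i) = i`, if `f 1` strictly interlaces `f 2`, and
if for each `d ≥ 2` there are an affine `ℓ_d` and a quadratic `q_d`, positive on
`(-∞, 0]`, with `f (d+1) = ℓ_d * f d - q_d * f (d-1)`, then every `f i` is
real-rooted and `f i` strictly interlaces `f (i+1)`. -/
theorem interlacing_lemma (f : ℕ → Polynomial ℝ)
    (hcoeff : ∀ i, 1 ≤ i → ∀ j, 0 ≤ (f i).coeff j)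
    (hdeg : ∀ i, 1 ≤ i → (f i).natDegree = i)
    (h12 : StrictlyInterlaces (f 1) (f 2))
    (hrec : ∀ d, 2 ≤ d → ∃ ℓ q : Polynomial ℝ,
      ℓ.natDegree ≤ 1 ∧ q.natDegree = 2 ∧ (∀ x : ℝ, x ≤ 0 → 0 < q.eval x) ∧
      f (d + 1) = ℓ * f d - q * f (d - 1)) :
    ∀ i, 1 ≤ i → RealRooted (f i) ∧ StrictlyInterlaces (f i) (f (i + 1)) := by
  have main : ∀ i, 1 ≤ i → StrictlyInterlaces (f i) (f (i + 1)) := by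
    intro i hi
    induction i with
    | zero => omega
    | succ k ih =>
      rcases Nat.lt_or_ge k 1 with h1 | h1
      · obtain rfl : k = 0 := by omega
        simpa using h12
      · have hSk := ih h1
        obtain ⟨ℓ, q, hℓ, hqdeg, hq, hrec'⟩ := hrec (k + 1) (by omega)
        have hrec'' : f (k + 2) = ℓ * f (k + 1) - q * f k := by simpa using hrec'
        exact step (f k) (f (k + 1)) (f (k + 2)) ℓ q hSk
          (lc_pos_of_nonneg _ hSk.1 (hcoeff k h1))
          (roots_nonpos _ hSk.2.1 (hcoeff (k + 1) (by omega)))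
          hq hrec''
          (by rw [hdeg (k + 2) (by omega), hdeg (k + 1) (by omega)])
          (hcoeff (k + 2) (by omega))
  intro i hi
  exact ⟨realRooted_of_card (main i hi).1 (main i hi).2.2.2.1, main i hi⟩
end

section
/- Unique strictly monotone factorisation: for every integer k ≥ 1 and every permutation σ ∈ S_k, there exists exactly one sequence (τ_1, …, τ_r) of transpositions in S_k (allowing r = 0) such that τ_1 τ_2 ⋯ τ_r = σ and, writing τ_i = (a_i b_i) with a_i < b_i, one has b_1 < b_2 < ⋯ < b_r. -/
/-- The larger of the two points moved by a transposition (as a natural number);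
more generally, the largest non-fixed point of a permutation of `Fin k`. -/
def swapTop {k : ℕ} (π : Equiv.Perm (Fin k)) : ℕ :=
  π.support.sup fun x => (x : ℕ)

lemma le_swapTop {k : ℕ} {π : Equiv.Perm (Fin k)} {x : Fin k} (hx : x ∈ π.support) :
    (x : ℕ) ≤ swapTop π := Finset.le_sup hx

lemma fix_of_tops_lt {k n : ℕ} {l : List (Equiv.Perm (Fin k))}
    (h : ∀ τ ∈ l, swapTop τ < n) {x : Fin k} (hx : n ≤ (x : ℕ)) :
    l.prod x = x := by
  induction l with
  | nil => simp
  | cons τ rest ih =>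
    have h1 : rest.prod x = x := ih (fun τ' hτ' => h τ' (List.mem_cons_of_mem _ hτ'))
    have h2 : τ x = x := by
      by_contra hc
      have hm : (x : ℕ) ≤ swapTop τ := le_swapTop (Equiv.Perm.mem_support.mpr hc)
      have := h τ List.mem_cons_self
      omega
    simp [List.prod_cons, Equiv.Perm.mul_apply, h1, h2]

lemma swapTop_swap {k : ℕ} {a b : Fin k} (h : a < b) :
    swapTop (Equiv.swap a b) = (b : ℕ) := by
  rw [swapTop, Equiv.Perm.support_swap h.ne]
  have : (a : ℕ) ≤ (b : ℕ) := le_of_lt h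
  simp [Finset.sup_insert, Finset.sup_singleton]
  omega

lemma isSwap_lt {k : ℕ} {τ : Equiv.Perm (Fin k)} (h : τ.IsSwap) :
    ∃ a b : Fin k, a < b ∧ τ = Equiv.swap a b := by
  obtain ⟨a, b, hne, rfl⟩ := h
  rcases lt_or_gt_of_ne hne with h | h
  · exact ⟨a, b, h, rfl⟩
  · exact ⟨b, a, h, Equiv.swap_comm a b⟩

lemma key {k : ℕ} {l : List (Equiv.Perm (Fin k))} {a b : Fin k} (hab : a < b)
    (ht : ∀ τ ∈ l, swapTop τ < (b : ℕ)) :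
    b ∈ (l.prod * Equiv.swap a b).support ∧
    swapTop (l.prod * Equiv.swap a b) = (b : ℕ) ∧
    (l.prod * Equiv.swap a b)⁻¹ b = a := by
  have hfix : ∀ x : Fin k, (b : ℕ) ≤ (x : ℕ) → l.prod x = x :=
    fun x hx => fix_of_tops_lt ht hx
  have hσb : (l.prod * Equiv.swap a b) b = l.prod a := by
    simp [Equiv.Perm.mul_apply, Equiv.swap_apply_right]
  have hlt : ((l.prod a : Fin k) : ℕ) < (b : ℕ) := by
    by_contra hc
    push_neg at hc
    have h1 : l.prod (l.prod a) = l.prod a := hfix _ hc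
    have h2 : l.prod a = a := l.prod.injective h1
    rw [h2] at hc
    exact absurd hab (by omega)
  have hmem : b ∈ (l.prod * Equiv.swap a b).support := by
    rw [Equiv.Perm.mem_support, hσb]
    intro hEq
    rw [hEq] at hlt
    omega
  have hub : ∀ x ∈ (l.prod * Equiv.swap a b).support, (x : ℕ) ≤ (b : ℕ) := by
    intro x hx
    by_contra hc
    push_neg at hc
    have hxa : x ≠ a := by intro h; rw [h] at hc; have := hab; omega
    have hxb : x ≠ b := by intro h; rw [h] at hc; omega
    have : (l.prod * Equiv.swap a b) x = x := by
      simp [Equiv.Perm.mul_apply, Equiv.swap_apply_of_ne_of_ne hxa hxb,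
        hfix x (le_of_lt hc)]
    exact (Equiv.Perm.mem_support.mp hx) this
  have htop : swapTop (l.prod * Equiv.swap a b) = (b : ℕ) :=
    le_antisymm (Finset.sup_le hub) (le_swapTop hmem)
  have hinva : (l.prod * Equiv.swap a b) a = b := by
    simp [Equiv.Perm.mul_apply, Equiv.swap_apply_left, hfix b le_rfl]
  exact ⟨hmem, htop, by rw [Equiv.Perm.inv_eq_iff_eq, hinva]⟩

def Valid {k : ℕ} (σ : Equiv.Perm (Fin k)) (l : List (Equiv.Perm (Fin k))) : Prop :=
  (∀ τ ∈ l, τ.IsSwap) ∧ List.Pairwise (· < ·) (l.map swapTop) ∧ l.prod = σ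

lemma tops_le {k : ℕ} {σ : Equiv.Perm (Fin k)} {l : List (Equiv.Perm (Fin k))}
    (hv : Valid σ l) : ∀ t ∈ l.map swapTop, t ≤ swapTop σ := by
  rcases List.eq_nil_or_concat l with rfl | ⟨l', τ, rfl⟩
  · simp
  · rw [List.concat_eq_append] at *
    obtain ⟨hs, hp, hprod⟩ := hv
    obtain ⟨a, b, hab, rfl⟩ := isSwap_lt (hs τ (by simp))
    rw [List.map_append, List.pairwise_append] at hp
    have htop : ∀ t ∈ l'.map swapTop, t < (b : ℕ) := by
      intro t htl
      have := hp.2.2 t htl (swapTop (Equiv.swap a b)) (by simp)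
      rwa [swapTop_swap hab] at this
    have hkey := key hab (fun τ' hτ' => htop _ (List.mem_map_of_mem (f := swapTop) hτ'))
    rw [List.prod_append, List.prod_singleton] at hprod
    intro t ht
    rw [List.map_append, List.mem_append] at ht
    rcases ht with h | h
    · have := htop t h
      rw [← hprod, hkey.2.1]
      omega
    · simp only [List.map_cons, List.map_nil, List.mem_singleton] at h
      rw [h, swapTop_swap hab, ← hprod, hkey.2.1]

lemma main {k : ℕ} : ∀ n (σ : Equiv.Perm (Fin k)), swapTop σ ≤ n → ∃! l, Valid σ l := by
  intro n
  induction n using Nat.strong_induction_on with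
  | _ n ih =>
  intro σ hσn
  by_cases h1 : σ = 1
  · subst h1
    refine ⟨[], ⟨by simp, by simp, by simp⟩, ?_⟩
    intro m hm
    rcases List.eq_nil_or_concat m with rfl | ⟨m', τ, rfl⟩
    · rfl
    · exfalso
      rw [List.concat_eq_append] at hm
      obtain ⟨hs, hp, hprod⟩ := hm
      obtain ⟨a, b, hab, rfl⟩ := isSwap_lt (hs τ (by simp))
      rw [List.map_append, List.pairwise_append] at hp
      have htop : ∀ τ' ∈ m', swapTop τ' < (b : ℕ) := by
        intro τ' hτ'
        have := hp.2.2 (swapTop τ') (List.mem_map_of_mem (f := swapTop) hτ')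
          (swapTop (Equiv.swap a b)) (by simp)
        rwa [swapTop_swap hab] at this
      have hkey := key hab htop
      rw [List.prod_append, List.prod_singleton] at hprod
      rw [hprod] at hkey
      simpa using hkey.1
  · -- σ ≠ 1
    have hne : σ.support.Nonempty := by
      rw [Finset.nonempty_iff_ne_empty, Ne, Equiv.Perm.support_eq_empty_iff]
      exact h1
    set B := σ.support.max' hne with hBdef
    have hBmem : B ∈ σ.support := σ.support.max'_mem hne
    have hBub : ∀ x ∈ σ.support, x ≤ B := fun x hx => σ.support.le_max' x hx
    have hstσ : swapTop σ = (B : ℕ) := by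
      refine le_antisymm (Finset.sup_le fun x hx => ?_) (le_swapTop hBmem)
      exact hBub x hx
    set a := σ⁻¹ B with hadef
    have haB : σ a = B := by simp [hadef]
    have haneB : a ≠ B := by
      intro h
      rw [h] at haB
      exact (Equiv.Perm.mem_support.mp hBmem) haB
    have hamem : a ∈ σ.support := by
      rw [Equiv.Perm.mem_support, haB]
      exact fun h => haneB h.symm
    have hab : a < B := lt_of_le_of_ne (hBub a hamem) haneB
    set π := σ * Equiv.swap a B with hπdef
    have hπfix : ∀ x : Fin k, (B : ℕ) ≤ (x : ℕ) → π x = x := by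
      intro x hx
      rcases eq_or_lt_of_le hx with h | h
      · have hxB : x = B := Fin.ext h.symm
        subst hxB
        simp [hπdef, Equiv.Perm.mul_apply, Equiv.swap_apply_right, haB]
      · have hxa : x ≠ a := by intro hh; rw [hh] at h; have := hab; omega
        have hxB : x ≠ B := by intro hh; rw [hh] at h; omega
        have hxs : x ∉ σ.support := by
          intro hh
          have := hBub x hh
          omega
        rw [Equiv.Perm.notMem_support] at hxs
        simp [hπdef, Equiv.Perm.mul_apply, Equiv.swap_apply_of_ne_of_ne hxa hxB, hxs]
    have hπtop : swapTop π < (B : ℕ) := by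
      have hBpos : 0 < (B : ℕ) := by have := hab; omega
      rw [swapTop]
      rw [Finset.sup_lt_iff hBpos]
      intro x hx
      by_contra hc
      push_neg at hc
      exact (Equiv.Perm.mem_support.mp hx) (hπfix x hc)
    have hlt : swapTop π < n := lt_of_lt_of_le (by rw [← hstσ] at hπtop; exact hπtop) hσn
    obtain ⟨l', hl', hl'uniq⟩ := ih (swapTop π) hlt π le_rfl
    obtain ⟨hl's, hl'p, hl'prod⟩ := hl'
    have hl'tops : ∀ t ∈ l'.map swapTop, t < (B : ℕ) := by
      intro t ht
      have := tops_le ⟨hl's, hl'p, hl'prod⟩ t ht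
      omega
    refine ⟨l' ++ [Equiv.swap a B], ⟨?_, ?_, ?_⟩, ?_⟩
    · intro τ hτ
      rw [List.mem_append] at hτ
      rcases hτ with h | h
      · exact hl's τ h
      · simp only [List.mem_singleton] at h
        exact h ▸ ⟨a, B, haneB, rfl⟩
    · rw [List.map_append, List.pairwise_append]
      refine ⟨hl'p, by simp, ?_⟩
      intro x hx y hy
      simp only [List.map_cons, List.map_nil, List.mem_singleton] at hy
      rw [hy, swapTop_swap hab]
      exact hl'tops x hx
    · rw [List.prod_append, List.prod_singleton, hl'prod, hπdef,
        mul_assoc, Equiv.swap_mul_self, mul_one]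
    · intro m hm
      rcases List.eq_nil_or_concat m with rfl | ⟨m', τ, rfl⟩
      · exfalso
        exact h1 hm.2.2.symm
      · rw [List.concat_eq_append] at *
        obtain ⟨hs, hp, hprod⟩ := hm
        obtain ⟨a', b', hab', rfl⟩ := isSwap_lt (hs τ (by simp))
        rw [List.map_append, List.pairwise_append] at hp
        have htop : ∀ τ' ∈ m', swapTop τ' < (b' : ℕ) := by
          intro τ' hτ'
          have := hp.2.2 (swapTop τ') (List.mem_map_of_mem (f := swapTop) hτ')
            (swapTop (Equiv.swap a' b')) (by simp)
          rwa [swapTop_swap hab'] at this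
        have hkey := key hab' htop
        rw [List.prod_append, List.prod_singleton] at hprod
        rw [hprod] at hkey
        have hb'B : b' = B := Fin.ext (by rw [← hkey.2.1, hstσ])
        subst hb'B
        have ha'a : a' = a := by rw [← hkey.2.2, hadef]
        subst ha'a
        have hm'prod : m'.prod = π := by
          rw [hπdef, ← hprod, mul_assoc, Equiv.swap_mul_self, mul_one]
        have : m' = l' := hl'uniq m' ⟨fun τ' h => hs τ' (List.mem_append_left _ h),
          hp.1, hm'prod⟩
        rw [this]

/-- **Unique strictly monotone factorisation**: every `σ ∈ S_k` admits exactly one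
sequence `(τ_1, …, τ_r)` of transpositions (allowing `r = 0`, represented as a list)
with `τ_1 τ_2 ⋯ τ_r = σ` whose larger moved points are strictly increasing. -/
theorem unique_strictly_monotone_factorisation (k : ℕ) (hk : 1 ≤ k)
    (σ : Equiv.Perm (Fin k)) :
    ∃! l : List (Equiv.Perm (Fin k)),
      (∀ τ ∈ l, τ.IsSwap) ∧ List.Pairwise (· < ·) (l.map swapTop) ∧ l.prod = σ := by
  exact main (swapTop σ) σ le_rfl
end
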